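/- arXiv:2604.26729 — 5 statements merged into one kernel-verified Lean document; each statement's English description precedes it below -/
import Mathlib

section
/- Let D, Z be {0,1}-valued random variables and X a random variable. Suppose the pair (D(0), D(1)) of potential treatments is conditionally independent of Z given X, that D = Z·D(1) + (1-Z)·D(0), that 0 < P(Z = 1 | X) < 1 a.s., and that P(D(1) ≥ D(0) | X) = 1 (monotonicity). Then P(D(1) > D(0) | X) = P(D = 1 | X, Z = 1) - P(D = 1 | X, Z = 0) almost surely. -/
open MeasureTheory Real

/-- The σ-algebra generated by a map X. -/
def sigmaX {Ω 𝓧 : Type*} [MeasurableSpace 𝓧] (X : Ω → 𝓧) : MeasurableSpace Ω :=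
  MeasurableSpace.comap X inferInstance

/-!
Monotonicity turns the complier indicator into `D1 - D0`, so its conditional expectation is
`E[D1 | X] - E[D0 | X]`. Consistency gives `D Z = D1 Z` and `D (1 - Z) = D0 - D0 Z`, and conditional
independence factors `E[Dᵢ Z | X] = E[Dᵢ | X] · P(Z = 1 | X)`; dividing by the (positive)
propensities `P(Z = 1 | X)` and `1 - P(Z = 1 | X)` recovers `E[D1 | X]` and `E[D0 | X]`.
-/

lemma max_zero_min_one_eq_self {x : ℝ} (hx : x = 0 ∨ x = 1) : max 0 (min x 1) = x := by
  rcases hx with rfl | rfl <;> norm_num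

lemma abs_max_zero_min_one_le_one (x : ℝ) : |max 0 (min x 1)| ≤ 1 := by
  rw [abs_le]; constructor <;> simp

lemma mul_eq_zero_or_one {x y : ℝ} (hx : x = 0 ∨ x = 1) (hy : y = 0 ∨ y = 1) :
    x * y = 0 ∨ x * y = 1 := by
  rcases hx with rfl | rfl <;> simp [hy]

lemma ite_lt_eq_sub_of_le {a b : ℝ} (ha : a = 0 ∨ a = 1) (hb : b = 0 ∨ b = 1) (hab : a ≤ b) :
    (if a < b then (1 : ℝ) else 0) = b - a := by
  rcases ha with rfl | rfl <;> rcases hb with rfl | rfl <;> norm_num at *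

lemma mul_eq_mul_of_eq_select {z d d0 d1 : ℝ} (hz : z = 0 ∨ z = 1)
    (hd : d = z * d1 + (1 - z) * d0) : d * z = d1 * z := by
  rcases hz with rfl | rfl <;> simp [hd]

lemma mul_one_sub_eq_of_eq_select {z d d0 d1 : ℝ} (hz : z = 0 ∨ z = 1)
    (hd : d = z * d1 + (1 - z) * d0) : d * (1 - z) = d0 - d0 * z := by
  rcases hz with rfl | rfl <;> simp [hd]

lemma div_sub_div_one_sub_eq {a b g : ℝ} (hg0 : 0 < g) (hg1 : g < 1) :
    a * g / g - (b - b * g) / (1 - g) = a - b := by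
  have : 1 - g ≠ 0 := by linarith
  field_simp

section CondExp

variable {Ω : Type*} {m m₀ : MeasurableSpace Ω} {μ : Measure Ω}

lemma integrable_of_eq_zero_or_one [IsFiniteMeasure μ] {f : Ω → ℝ} (hf : Measurable f)
    (h01 : ∀ ω, f ω = 0 ∨ f ω = 1) : Integrable f μ :=
  Integrable.of_bound hf.aestronglyMeasurable 1 <| Filter.Eventually.of_forall fun ω => by
    rcases h01 ω with h | h <;> simp [h]

/-- Clamping `f` to `[0, 1]` makes it bounded without changing it on the range of `W`. -/
lemma condExp_mul_eq_of_factorization {E : Type*} [MeasurableSpace E] (W : Ω → E) (Z g : Ω → ℝ)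
    (f : E → ℝ) (hf : Measurable f) (h01 : ∀ ω, f (W ω) = 0 ∨ f (W ω) = 1)
    (hfactor : ∀ φ : E → ℝ, Measurable φ → (∃ K, ∀ v, |φ v| ≤ K) →
      μ[fun ω => φ (W ω) * Z ω | m] =ᵐ[μ] fun ω => (μ[fun ω' => φ (W ω') | m]) ω * g ω) :
    μ[fun ω => f (W ω) * Z ω | m] =ᵐ[μ] fun ω => (μ[fun ω' => f (W ω') | m]) ω * g ω := by
  have h := hfactor (fun v => max 0 (min (f v) 1)) (by fun_prop)
    ⟨1, fun v => abs_max_zero_min_one_le_one _⟩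
  simpa only [max_zero_min_one_eq_self (h01 _)] using h

end CondExp

theorem stmt4_general {Ω 𝓧 : Type*} [MeasurableSpace Ω] [MeasurableSpace 𝓧]
    (P : Measure Ω) [IsProbabilityMeasure P]
    (X : Ω → 𝓧)
    (Z D D0 D1 : Ω → ℝ)
    (hZm : Measurable Z) (hD0m : Measurable D0) (hD1m : Measurable D1)
    (hZ01 : ∀ ω, Z ω = 0 ∨ Z ω = 1)
    (hD0 : ∀ ω, D0 ω = 0 ∨ D0 ω = 1) (hD1 : ∀ ω, D1 ω = 0 ∨ D1 ω = 1)
    (hcons : ∀ ω, D ω = Z ω * D1 ω + (1 - Z ω) * D0 ω)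
    (hmono : ∀ᵐ ω ∂P, D0 ω ≤ D1 ω)
    (g₀ : Ω → ℝ)
    (hpos : ∀ᵐ ω ∂P, 0 < g₀ ω ∧ g₀ ω < 1)
    -- conditional independence of (D0, D1) and Z given X
    (hindep : ∀ φ : ℝ × ℝ → ℝ, Measurable φ → (∃ K, ∀ v, |φ v| ≤ K) →
      P[fun ω => φ (D0 ω, D1 ω) * Z ω | sigmaX X]
        =ᵐ[P] fun ω => (P[fun ω' => φ (D0 ω', D1 ω') | sigmaX X]) ω * g₀ ω) :
    P[fun ω => if D0 ω < D1 ω then (1 : ℝ) else 0 | sigmaX X]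
      =ᵐ[P] fun ω =>
        (P[fun ω' => D ω' * Z ω' | sigmaX X]) ω / g₀ ω
          - (P[fun ω' => D ω' * (1 - Z ω') | sigmaX X]) ω / (1 - g₀ ω) := by
  have hD0Z : P[fun ω => D0 ω * Z ω | sigmaX X] =ᵐ[P] fun ω => (P[D0 | sigmaX X]) ω * g₀ ω :=
    condExp_mul_eq_of_factorization (fun ω => (D0 ω, D1 ω)) Z g₀ Prod.fst measurable_fst hD0 hindep
  have hD1Z : P[fun ω => D1 ω * Z ω | sigmaX X] =ᵐ[P] fun ω => (P[D1 | sigmaX X]) ω * g₀ ω :=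
    condExp_mul_eq_of_factorization (fun ω => (D0 ω, D1 ω)) Z g₀ Prod.snd measurable_snd hD1 hindep
  have hDZ : (fun ω => D ω * Z ω) = fun ω => D1 ω * Z ω :=
    funext fun ω => mul_eq_mul_of_eq_select (hZ01 ω) (hcons ω)
  have hDZc : (fun ω => D ω * (1 - Z ω)) = D0 - fun ω => D0 ω * Z ω :=
    funext fun ω => mul_one_sub_eq_of_eq_select (hZ01 ω) (hcons ω)
  have hcomplier : (fun ω => if D0 ω < D1 ω then (1 : ℝ) else 0) =ᵐ[P] D1 - D0 := by
    filter_upwards [hmono] with ω hle using ite_lt_eq_sub_of_le (hD0 ω) (hD1 ω) hle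
  have hiD0 : Integrable D0 P := integrable_of_eq_zero_or_one hD0m hD0
  have hiD1 : Integrable D1 P := integrable_of_eq_zero_or_one hD1m hD1
  have hiD0Z : Integrable (fun ω => D0 ω * Z ω) P :=
    integrable_of_eq_zero_or_one (hD0m.mul hZm) fun ω => mul_eq_zero_or_one (hD0 ω) (hZ01 ω)
  filter_upwards [condExp_congr_ae (m := sigmaX X) hcomplier, condExp_sub hiD1 hiD0 (sigmaX X),
    condExp_sub hiD0 hiD0Z (sigmaX X), hD0Z, hD1Z, hpos]
    with ω hc hsub hsubZ h0 h1 hp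
  rw [hc, hsub, hDZ, h1, hDZc, hsubZ]
  simp only [Pi.sub_apply, h0]
  exact (div_sub_div_one_sub_eq hp.1 hp.2).symm

/-- Identification of the conditional complier probability:
P(D(1)>D(0) | X) = P(D=1 | X, Z=1) - P(D=1 | X, Z=0), where the conditional
probabilities given (X, Z=z) are expressed as ratios of conditional
expectations given X. -/
theorem stmt4 {Ω 𝓧 : Type*} [MeasurableSpace Ω] [MeasurableSpace 𝓧]
    (P : Measure Ω) [IsProbabilityMeasure P]
    (X : Ω → 𝓧) (hX : Measurable X)
    (Z D D0 D1 : Ω → ℝ)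
    (hZm : Measurable Z) (hD0m : Measurable D0) (hD1m : Measurable D1)
    (hZ01 : ∀ ω, Z ω = 0 ∨ Z ω = 1)
    (hD0 : ∀ ω, D0 ω = 0 ∨ D0 ω = 1) (hD1 : ∀ ω, D1 ω = 0 ∨ D1 ω = 1)
    (hcons : ∀ ω, D ω = Z ω * D1 ω + (1 - Z ω) * D0 ω)
    (hmono : ∀ᵐ ω ∂P, D0 ω ≤ D1 ω)
    (g₀ : Ω → ℝ) (hg₀ : g₀ =ᵐ[P] P[Z | sigmaX X])
    (hpos : ∀ᵐ ω ∂P, 0 < g₀ ω ∧ g₀ ω < 1)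
    -- conditional independence of (D0, D1) and Z given X
    (hindep : ∀ φ : ℝ × ℝ → ℝ, Measurable φ → (∃ K, ∀ v, |φ v| ≤ K) →
      P[fun ω => φ (D0 ω, D1 ω) * Z ω | sigmaX X]
        =ᵐ[P] fun ω => (P[fun ω' => φ (D0 ω', D1 ω') | sigmaX X]) ω * g₀ ω) :
    P[fun ω => if D0 ω < D1 ω then (1 : ℝ) else 0 | sigmaX X]
      =ᵐ[P] fun ω =>
        (P[fun ω' => D ω' * Z ω' | sigmaX X]) ω / g₀ ω
          - (P[fun ω' => D ω' * (1 - Z ω') | sigmaX X]) ω / (1 - g₀ ω) :=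
  stmt4_general P X Z D D0 D1 hZm hD0m hD1m hZ01 hD0 hD1 hcons hmono g₀ hpos hindep
end

section
/- Let (Y(0), Y(1), D(0), D(1)) be potential outcomes/treatments, Z a {0,1}-valued instrument, X covariates, with observed D = Z D(1) + (1-Z) D(0) and Y = D Y(1) + (1-D) Y(0). Assume: (i) (Y(0), Y(1), D(0), D(1)) ⫫ Z | X; (ii) g₀(X) := P(Z=1|X) satisfies 0 < g₀(X) < 1 a.s.; (iii) P(D(1) ≥ D(0) | X) = 1. Define κ⁽¹⁾ = D(Z - g₀(X))/(g₀(X)(1-g₀(X))). Then for every measurable function h with E|h(Y,X)| < ∞, E[κ⁽¹⁾ h(Y, X)] = E[h(Y(1), X)·1{D(1) > D(0)}]. -/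
open MeasureTheory Real

/-!
Write `g = P[Z | X]` and `W = (Y(1), D(0), D(1))`. Conditional independence gives
`∫_{W ∈ s, X ∈ t} Z = ∫_{W ∈ s, X ∈ t} g`, so by a π-system argument the measures with densities
`Z` and `g`, and those with densities `1 - Z` and `1 - g`, agree on `σ(W, X)`. Hence `Z` may be
replaced by `g` in front of any `σ(W, X)`-measurable function, which is inverse propensity
weighting: `E[Z a(W, X) / g - (1 - Z) b(W, X) / (1 - g)] = E[a(W, X) - b(W, X)]`.
Where `0 < g < 1`, `κ⁽¹⁾ h(Y, X)` is such a weighted difference with `a = D(1) h(Y(1), X)` and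
`b = D(0) h(Y(1), X)`, and monotonicity turns `a - b` into `h(Y(1), X) 1{D(0) < D(1)}`.
Integrability of the `a` term transfers between the two sides through the same measure identity,
so when it fails both integrals are the junk value `0`.
-/

section WeightedTrim

variable {Ω : Type*} {m mΩ : MeasurableSpace Ω} {μ : Measure Ω} {w w₁ w₂ : Ω → ℝ}

lemma integral_withDensity_ofReal (hw : AEMeasurable w μ) (hw0 : 0 ≤ᵐ[μ] w)
    (F : Ω → ℝ) :
    ∫ ω, F ω ∂μ.withDensity (fun ω => ENNReal.ofReal (w ω)) = ∫ ω, w ω * F ω ∂μ := by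
  rw [integral_withDensity_eq_integral_toReal_smul₀ hw.ennreal_ofReal
    (ae_of_all _ fun _ => ENNReal.ofReal_lt_top)]
  refine integral_congr_ae ?_
  filter_upwards [hw0] with ω hω
  simp [ENNReal.toReal_ofReal hω]

lemma integrable_withDensity_ofReal_iff (hw : AEMeasurable w μ) (hw0 : 0 ≤ᵐ[μ] w)
    {F : Ω → ℝ} :
    Integrable F (μ.withDensity fun ω => ENNReal.ofReal (w ω)) ↔
      Integrable (fun ω => w ω * F ω) μ := by
  rw [integrable_withDensity_iff_integrable_smul₀' hw.ennreal_ofReal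
    (ae_of_all _ fun _ => ENNReal.ofReal_lt_top)]
  refine integrable_congr ?_
  filter_upwards [hw0] with ω hω
  simp [ENNReal.toReal_ofReal hω]

lemma integral_mul_eq_of_trim_withDensity_eq (hm : m ≤ mΩ)
    (hw₁ : AEMeasurable w₁ μ) (hw₂ : AEMeasurable w₂ μ) (hw₁0 : 0 ≤ᵐ[μ] w₁) (hw₂0 : 0 ≤ᵐ[μ] w₂)
    (h : (μ.withDensity fun ω => ENNReal.ofReal (w₁ ω)).trim hm =
      (μ.withDensity fun ω => ENNReal.ofReal (w₂ ω)).trim hm)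
    {F : Ω → ℝ} (hF : StronglyMeasurable[m] F) :
    ∫ ω, w₁ ω * F ω ∂μ = ∫ ω, w₂ ω * F ω ∂μ := by
  rw [← integral_withDensity_ofReal hw₁ hw₁0, ← integral_withDensity_ofReal hw₂ hw₂0,
    integral_trim hm hF, h, ← integral_trim hm hF]

lemma integrable_mul_iff_of_trim_withDensity_eq (hm : m ≤ mΩ)
    (hw₁ : AEMeasurable w₁ μ) (hw₂ : AEMeasurable w₂ μ) (hw₁0 : 0 ≤ᵐ[μ] w₁) (hw₂0 : 0 ≤ᵐ[μ] w₂)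
    (h : (μ.withDensity fun ω => ENNReal.ofReal (w₁ ω)).trim hm =
      (μ.withDensity fun ω => ENNReal.ofReal (w₂ ω)).trim hm)
    {F : Ω → ℝ} (hF : StronglyMeasurable[m] F) :
    Integrable (fun ω => w₁ ω * F ω) μ ↔ Integrable (fun ω => w₂ ω * F ω) μ := by
  rw [← integrable_withDensity_ofReal_iff hw₁ hw₁0, ← integrable_withDensity_ofReal_iff hw₂ hw₂0]
  constructor <;> intro hi
  · exact integrable_of_integrable_trim hm (h ▸ hi.trim hm hF)
  · exact integrable_of_integrable_trim hm (h.symm ▸ hi.trim hm hF)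

lemma trim_withDensity_ofReal_eq_of_setIntegral_prod_eq {α β : Type*} [MeasurableSpace α]
    [MeasurableSpace β] [IsFiniteMeasure μ] {U : Ω → α} {V : Ω → β} (hU : Measurable U)
    (hV : Measurable V)
    (hw₁ : Integrable w₁ μ) (hw₂ : Integrable w₂ μ) (hw₁0 : 0 ≤ᵐ[μ] w₁) (hw₂0 : 0 ≤ᵐ[μ] w₂)
    (h : ∀ s t, MeasurableSet s → MeasurableSet t →
      ∫ ω in U ⁻¹' s ∩ V ⁻¹' t, w₁ ω ∂μ = ∫ ω in U ⁻¹' s ∩ V ⁻¹' t, w₂ ω ∂μ) :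
    (μ.withDensity fun ω => ENNReal.ofReal (w₁ ω)).trim (hU.prodMk hV).comap_le =
      (μ.withDensity fun ω => ENNReal.ofReal (w₂ ω)).trim (hU.prodMk hV).comap_le := by
  have hrect : ∀ s t, MeasurableSet s → MeasurableSet t →
      μ.withDensity (fun ω => ENNReal.ofReal (w₁ ω)) (U ⁻¹' s ∩ V ⁻¹' t) =
        μ.withDensity (fun ω => ENNReal.ofReal (w₂ ω)) (U ⁻¹' s ∩ V ⁻¹' t) := by
    intro s t hs ht
    rw [withDensity_apply _ ((hU hs).inter (hV ht)), withDensity_apply _ ((hU hs).inter (hV ht)),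
      ← ofReal_integral_eq_lintegral_ofReal hw₁.integrableOn (ae_restrict_of_ae hw₁0),
      ← ofReal_integral_eq_lintegral_ofReal hw₂.integrableOn (ae_restrict_of_ae hw₂0),
      h s t hs ht]
  have := isFiniteMeasure_withDensity_ofReal hw₁.2
  refine ext_of_generate_finite _ ?_ (isPiSystem_prod.comap fun ω => (U ω, V ω)) ?_ ?_
  · rw [← generateFrom_prod, MeasurableSpace.comap_generateFrom]
    rfl
  · rintro _ ⟨_, ⟨s, hs, t, ht, rfl⟩, rfl⟩
    have hst := comap_measurable (fun ω => (U ω, V ω)) (hs.prod ht)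
    rw [trim_measurableSet_eq _ hst, trim_measurableSet_eq _ hst, Set.mk_preimage_prod]
    exact hrect s t hs ht
  · simpa [trim_measurableSet_eq] using hrect _ _ MeasurableSet.univ MeasurableSet.univ

end WeightedTrim

lemma integral_sub_eq_integral_sub {α : Type*} {mα : MeasurableSpace α} {μ : Measure α}
    {f₁ f₂ g₁ g₂ : α → ℝ} (hf : Integrable f₁ μ ↔ Integrable f₂ μ)
    (hf_eq : ∫ a, f₁ a ∂μ = ∫ a, f₂ a ∂μ) (hg₁ : Integrable g₁ μ) (hg₂ : Integrable g₂ μ)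
    (hg_eq : ∫ a, g₁ a ∂μ = ∫ a, g₂ a ∂μ) :
    ∫ a, (f₁ a - g₁ a) ∂μ = ∫ a, (f₂ a - g₂ a) ∂μ := by
  by_cases hf₁ : Integrable f₁ μ
  · rw [integral_sub hf₁ hg₁, integral_sub (hf.mp hf₁) hg₂, hf_eq, hg_eq]
  · have hf₂ : ¬Integrable f₂ μ := hf.not.mp hf₁
    rw [integral_undef fun h => hf₁ ((h.add hg₁).congr (ae_of_all _ fun a => sub_add_cancel _ _)),
      integral_undef fun h => hf₂ ((h.add hg₂).congr (ae_of_all _ fun a => sub_add_cancel _ _))]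

lemma ae_condExp_mem_Icc_zero_one {α : Type*} {m m₀ : MeasurableSpace α} {μ : Measure α}
    [IsFiniteMeasure μ] (hm : m ≤ m₀) {f : α → ℝ} (hf : Integrable f μ) (hf0 : 0 ≤ᵐ[μ] f)
    (hf1 : f ≤ᵐ[μ] 1) : ∀ᵐ a ∂μ, μ[f | m] a ∈ Set.Icc 0 1 := by
  have hle := condExp_mono (m := m) hf (integrable_const (1 : ℝ)) hf1
  rw [condExp_const hm] at hle
  filter_upwards [condExp_nonneg (m := m) hf0, hle] with a h0 h1
  exact ⟨h0, h1⟩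

section Instrument

variable {Ω 𝓧 β : Type*} [MeasurableSpace Ω] [MeasurableSpace 𝓧] [MeasurableSpace β]
  {P : Measure Ω} {X : Ω → 𝓧} {W : Ω → β} {Z : Ω → ℝ}

lemma measurable_condExp_comap_prodMk :
    Measurable[MeasurableSpace.comap (fun ω => (W ω, X ω)) inferInstance] (P[Z | sigmaX X]) :=
  stronglyMeasurable_condExp.measurable.mono
    (comap_measurable (fun ω => (W ω, X ω))).snd.comap_le le_rfl

variable [IsFiniteMeasure P]

lemma setIntegral_preimage_inter_eq_setIntegral_condExp (hX : Measurable X) (hW : Measurable W)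
    (hZ : Integrable Z P)
    (hind : ∀ φ : β → ℝ, Measurable φ → Integrable (fun ω => φ (W ω)) P →
      P[fun ω => φ (W ω) * Z ω | sigmaX X]
        =ᵐ[P] fun ω => P[fun ω' => φ (W ω') | sigmaX X] ω * P[Z | sigmaX X] ω)
    {s : Set β} (hs : MeasurableSet s) {t : Set 𝓧} (ht : MeasurableSet t) :
    ∫ ω in W ⁻¹' s ∩ X ⁻¹' t, Z ω ∂P = ∫ ω in W ⁻¹' s ∩ X ⁻¹' t, P[Z | sigmaX X] ω ∂P := by
  have hmX : sigmaX X ≤ ‹MeasurableSpace Ω› := hX.comap_le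
  have hXt : MeasurableSet[sigmaX X] (X ⁻¹' t) := ⟨t, ht, rfl⟩
  set g := P[Z | sigmaX X]
  set φ : β → ℝ := s.indicator 1
  have hφW : ∀ f : Ω → ℝ, (fun ω => φ (W ω) * f ω) = (W ⁻¹' s).indicator f := by
    intro f; ext ω; by_cases hω : W ω ∈ s <;> simp [φ, hω]
  have hφWint : Integrable (fun ω => φ (W ω)) P := (integrable_const (1 : ℝ)).indicator (hW hs)
  have hZint : Integrable (fun ω => φ (W ω) * Z ω) P := by rw [hφW]; exact hZ.indicator (hW hs)
  have hgint : Integrable (fun ω => φ (W ω) * g ω) P := by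
    rw [hφW]; exact integrable_condExp.indicator (hW hs)
  calc ∫ ω in W ⁻¹' s ∩ X ⁻¹' t, Z ω ∂P
      = ∫ ω in X ⁻¹' t, φ (W ω) * Z ω ∂P := by
        rw [hφW, setIntegral_indicator (hW hs), Set.inter_comm]
    _ = ∫ ω in X ⁻¹' t, P[fun ω => φ (W ω) * Z ω | sigmaX X] ω ∂P :=
        (setIntegral_condExp hmX hZint hXt).symm
    _ = ∫ ω in X ⁻¹' t, P[fun ω => φ (W ω) * g ω | sigmaX X] ω ∂P := by
        refine integral_congr_ae (ae_restrict_of_ae ?_)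
        exact (hind φ (measurable_const.indicator hs) hφWint).trans
          (condExp_mul_of_stronglyMeasurable_right stronglyMeasurable_condExp hgint hφWint).symm
    _ = ∫ ω in X ⁻¹' t, φ (W ω) * g ω ∂P := setIntegral_condExp hmX hgint hXt
    _ = ∫ ω in W ⁻¹' s ∩ X ⁻¹' t, g ω ∂P := by
        rw [hφW, setIntegral_indicator (hW hs), Set.inter_comm]

theorem integral_instrument_mul_sub_eq_condExp (hX : Measurable X) (hW : Measurable W)
    (hZm : Measurable Z) (hZ01 : ∀ ω, Z ω = 0 ∨ Z ω = 1)
    (hind : ∀ φ : β → ℝ, Measurable φ → Integrable (fun ω => φ (W ω)) P →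
      P[fun ω => φ (W ω) * Z ω | sigmaX X]
        =ᵐ[P] fun ω => P[fun ω' => φ (W ω') | sigmaX X] ω * P[Z | sigmaX X] ω)
    {A B : Ω → ℝ} (hA : Measurable[MeasurableSpace.comap (fun ω => (W ω, X ω)) inferInstance] A)
    (hB : Measurable[MeasurableSpace.comap (fun ω => (W ω, X ω)) inferInstance] B)
    (hBint : Integrable (fun ω => (1 - P[Z | sigmaX X] ω) * B ω) P) :
    ∫ ω, (Z ω * A ω - (1 - Z ω) * B ω) ∂P =
      ∫ ω, (P[Z | sigmaX X] ω * A ω - (1 - P[Z | sigmaX X] ω) * B ω) ∂P := by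
  set g := P[Z | sigmaX X]
  have hZ0 : 0 ≤ᵐ[P] Z := ae_of_all _ fun ω => by rcases hZ01 ω with h | h <;> simp [h]
  have hZ1 : Z ≤ᵐ[P] 1 := ae_of_all _ fun ω => by rcases hZ01 ω with h | h <;> simp [h]
  have hZ'0 : 0 ≤ᵐ[P] fun ω => 1 - Z ω := hZ1.mono fun ω hω => sub_nonneg.2 hω
  have hZ : Integrable Z P := Integrable.of_bound hZm.aestronglyMeasurable 1 <| by
    filter_upwards [hZ0, hZ1] with ω h0 h1
    rwa [Real.norm_of_nonneg h0]
  have hg : Integrable g P := integrable_condExp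
  have hg01 := ae_condExp_mem_Icc_zero_one (m := sigmaX X) hX.comap_le hZ hZ0 hZ1
  have hg0 : 0 ≤ᵐ[P] g := hg01.mono fun ω hω => hω.1
  have hg1 : 0 ≤ᵐ[P] fun ω => 1 - g ω := hg01.mono fun ω hω => sub_nonneg.2 hω.2
  have hrect := fun s t (hs : MeasurableSet s) (ht : MeasurableSet t) =>
    setIntegral_preimage_inter_eq_setIntegral_condExp hX hW hZ hind hs ht
  have hrect' : ∀ s t, MeasurableSet s → MeasurableSet t →
      ∫ ω in W ⁻¹' s ∩ X ⁻¹' t, (1 - Z ω) ∂P = ∫ ω in W ⁻¹' s ∩ X ⁻¹' t, (1 - g ω) ∂P := by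
    intro s t hs ht
    rw [integral_sub (integrable_const 1).integrableOn hZ.integrableOn,
      integral_sub (integrable_const 1).integrableOn hg.integrableOn, hrect s t hs ht]
  have htrim := trim_withDensity_ofReal_eq_of_setIntegral_prod_eq hW hX hZ hg hZ0 hg0 hrect
  have htrim' := trim_withDensity_ofReal_eq_of_setIntegral_prod_eq hW hX
    ((integrable_const 1).sub hZ) ((integrable_const 1).sub hg) hZ'0 hg1 hrect'
  have hZ'm : AEMeasurable (fun ω => 1 - Z ω) P := (measurable_const.sub hZm).aemeasurable
  have hg'm : AEMeasurable (fun ω => 1 - g ω) P := aemeasurable_const.sub hg.aemeasurable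
  exact integral_sub_eq_integral_sub
    (integrable_mul_iff_of_trim_withDensity_eq _ hZm.aemeasurable hg.aemeasurable hZ0 hg0 htrim
      hA.stronglyMeasurable)
    (integral_mul_eq_of_trim_withDensity_eq _ hZm.aemeasurable hg.aemeasurable hZ0 hg0 htrim
      hA.stronglyMeasurable)
    ((integrable_mul_iff_of_trim_withDensity_eq _ hZ'm hg'm hZ'0 hg1 htrim'
      hB.stronglyMeasurable).mpr hBint)
    hBint
    (integral_mul_eq_of_trim_withDensity_eq _ hZ'm hg'm hZ'0 hg1 htrim' hB.stronglyMeasurable)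

theorem integral_inverse_propensity_weighting (hX : Measurable X) (hW : Measurable W)
    (hZm : Measurable Z) (hZ01 : ∀ ω, Z ω = 0 ∨ Z ω = 1) {g₀ : Ω → ℝ}
    (hg₀ : g₀ =ᵐ[P] P[Z | sigmaX X]) (hpos : ∀ᵐ ω ∂P, 0 < g₀ ω ∧ g₀ ω < 1)
    (hind : ∀ φ : β → ℝ, Measurable φ → Integrable (fun ω => φ (W ω)) P →
      P[fun ω => φ (W ω) * Z ω | sigmaX X]
        =ᵐ[P] fun ω => P[fun ω' => φ (W ω') | sigmaX X] ω * g₀ ω)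
    {a b : β × 𝓧 → ℝ} (ha : Measurable a) (hb : Measurable b)
    (hb_int : Integrable (fun ω => b (W ω, X ω)) P) :
    ∫ ω, (Z ω * a (W ω, X ω) / g₀ ω - (1 - Z ω) * b (W ω, X ω) / (1 - g₀ ω)) ∂P =
      ∫ ω, (a (W ω, X ω) - b (W ω, X ω)) ∂P := by
  set g := P[Z | sigmaX X]
  have hg : ∀ᵐ ω ∂P, g₀ ω = g ω ∧ g ω ≠ 0 ∧ 1 - g ω ≠ 0 := by
    filter_upwards [hg₀, hpos] with ω he hω
    exact ⟨he, he ▸ hω.1.ne', he ▸ (sub_pos.2 hω.2).ne'⟩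
  have hind' : ∀ φ : β → ℝ, Measurable φ → Integrable (fun ω => φ (W ω)) P →
      P[fun ω => φ (W ω) * Z ω | sigmaX X]
        =ᵐ[P] fun ω => P[fun ω' => φ (W ω') | sigmaX X] ω * g ω := fun φ hφ hφint => by
    filter_upwards [hind φ hφ hφint, hg₀] with ω h₁ h₂
    rw [h₁, h₂]
  obtain ⟨hA, hB⟩ : Measurable[MeasurableSpace.comap (fun ω => (W ω, X ω)) inferInstance]
        (fun ω => a (W ω, X ω) / g ω) ∧
      Measurable[MeasurableSpace.comap (fun ω => (W ω, X ω)) inferInstance]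
        (fun ω => b (W ω, X ω) / (1 - g ω)) := by
    have hg𝓜 := measurable_condExp_comap_prodMk (P := P) (W := W) (X := X) (Z := Z)
    let _ := MeasurableSpace.comap (fun ω => (W ω, X ω)) inferInstance
    have hV : Measurable fun ω => (W ω, X ω) := comap_measurable _
    exact ⟨(ha.comp hV).div hg𝓜, (hb.comp hV).div (measurable_const.sub hg𝓜)⟩
  have hBint : Integrable (fun ω => (1 - g ω) * (b (W ω, X ω) / (1 - g ω))) P := by
    refine hb_int.congr ?_
    filter_upwards [hg] with ω hω
    rw [mul_div_cancel₀ _ hω.2.2]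
  calc ∫ ω, (Z ω * a (W ω, X ω) / g₀ ω - (1 - Z ω) * b (W ω, X ω) / (1 - g₀ ω)) ∂P
      = ∫ ω, (Z ω * (a (W ω, X ω) / g ω) - (1 - Z ω) * (b (W ω, X ω) / (1 - g ω))) ∂P := by
        refine integral_congr_ae ?_
        filter_upwards [hg] with ω hω
        rw [hω.1, mul_div_assoc, mul_div_assoc]
    _ = ∫ ω, (g ω * (a (W ω, X ω) / g ω) - (1 - g ω) * (b (W ω, X ω) / (1 - g ω))) ∂P :=
        integral_instrument_mul_sub_eq_condExp hX hW hZm hZ01 hind' hA hB hBint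
    _ = ∫ ω, (a (W ω, X ω) - b (W ω, X ω)) ∂P := by
        refine integral_congr_ae ?_
        filter_upwards [hg] with ω hω
        rw [mul_div_cancel₀ _ hω.2.1, mul_div_cancel₀ _ hω.2.2]

end Instrument

lemma kappa_mul_eq {z d₀ d₁ d g y₀ y₁ y : ℝ} (φ : ℝ → ℝ) (hz : z = 0 ∨ z = 1)
    (hd₀ : d₀ = 0 ∨ d₀ = 1) (hd₁ : d₁ = 0 ∨ d₁ = 1) (hd : d = z * d₁ + (1 - z) * d₀)
    (hy : y = d * y₁ + (1 - d) * y₀) (hg₀ : g ≠ 0) (hg₁ : 1 - g ≠ 0) :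
    d * (z - g) / (g * (1 - g)) * φ y = z * (d₁ * φ y₁) / g - (1 - z) * (d₀ * φ y₁) / (1 - g) := by
  subst hd hy
  rcases hz with rfl | rfl <;> rcases hd₀ with rfl | rfl <;> rcases hd₁ with rfl | rfl <;>
    norm_num <;> field_simp

lemma mul_sub_mul_eq_ite_lt {d₀ d₁ : ℝ} (a : ℝ) (hd₀ : d₀ = 0 ∨ d₀ = 1) (hd₁ : d₁ = 0 ∨ d₁ = 1)
    (hle : d₀ ≤ d₁) : d₁ * a - d₀ * a = if d₀ < d₁ then a else 0 := by
  rcases hd₀ with rfl | rfl <;> rcases hd₁ with rfl | rfl <;> norm_num at hle <;> simp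

lemma mul_apply_eq_mul_apply_treated_of_le {z d₀ d₁ d y₀ y₁ y : ℝ} (φ : ℝ → ℝ)
    (hd₀ : d₀ = 0 ∨ d₀ = 1) (hd₁ : d₁ = 0 ∨ d₁ = 1) (hle : d₀ ≤ d₁)
    (hd : d = z * d₁ + (1 - z) * d₀) (hy : y = d * y₁ + (1 - d) * y₀) :
    d₀ * φ y = d₀ * φ y₁ := by
  rcases hd₀ with rfl | rfl
  · simp
  · obtain rfl : d₁ = 1 := by rcases hd₁ with rfl | rfl <;> linarith
    norm_num [hy, hd]

theorem stmt5_general {Ω 𝓧 : Type*} [MeasurableSpace Ω] [MeasurableSpace 𝓧]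
    (P : Measure Ω) [IsProbabilityMeasure P]
    (X : Ω → 𝓧) (hX : Measurable X)
    (Z D D0 D1 Y Y0 Y1 : Ω → ℝ)
    (hZm : Measurable Z) (hD0m : Measurable D0) (hD1m : Measurable D1)
    (hY1m : Measurable Y1)
    (hZ01 : ∀ ω, Z ω = 0 ∨ Z ω = 1)
    (hD0 : ∀ ω, D0 ω = 0 ∨ D0 ω = 1) (hD1 : ∀ ω, D1 ω = 0 ∨ D1 ω = 1)
    (hconsD : ∀ ω, D ω = Z ω * D1 ω + (1 - Z ω) * D0 ω)
    (hconsY : ∀ ω, Y ω = D ω * Y1 ω + (1 - D ω) * Y0 ω)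
    (hmono : ∀ᵐ ω ∂P, D0 ω ≤ D1 ω)
    (g₀ : Ω → ℝ) (hg₀ : g₀ =ᵐ[P] P[Z | sigmaX X])
    (hpos : ∀ᵐ ω ∂P, 0 < g₀ ω ∧ g₀ ω < 1)
    -- conditional independence of (Y0, Y1, D0, D1) and Z given X
    (hindep : ∀ φ : ℝ × ℝ × ℝ × ℝ → ℝ, Measurable φ →
      Integrable (fun ω => φ (Y0 ω, Y1 ω, D0 ω, D1 ω)) P →
      P[fun ω => φ (Y0 ω, Y1 ω, D0 ω, D1 ω) * Z ω | sigmaX X]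
        =ᵐ[P] fun ω => (P[fun ω' => φ (Y0 ω', Y1 ω', D0 ω', D1 ω') | sigmaX X]) ω * g₀ ω)
    (κ1 : Ω → ℝ)
    (hκ1 : ∀ ω, κ1 ω = D ω * (Z ω - g₀ ω) / (g₀ ω * (1 - g₀ ω))) :
    ∀ h : ℝ × 𝓧 → ℝ, Measurable h → Integrable (fun ω => h (Y ω, X ω)) P →
      ∫ ω, κ1 ω * h (Y ω, X ω) ∂P
        = ∫ ω, (if D0 ω < D1 ω then h (Y1 ω, X ω) else 0) ∂P := by
  intro h hh hInt
  have ha : Measurable fun p : (ℝ × ℝ × ℝ) × 𝓧 => p.1.2.2 * h (p.1.1, p.2) := by fun_prop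
  have hb : Measurable fun p : (ℝ × ℝ × ℝ) × 𝓧 => p.1.2.1 * h (p.1.1, p.2) := by fun_prop
  have hb_int : Integrable (fun ω => D0 ω * h (Y1 ω, X ω)) P := by
    refine (hInt.bdd_mul (c := 1) hD0m.aestronglyMeasurable
      (ae_of_all _ fun ω => by rcases hD0 ω with h0 | h0 <;> simp [h0])).congr ?_
    filter_upwards [hmono] with ω hle
    exact mul_apply_eq_mul_apply_treated_of_le (fun y => h (y, X ω)) (hD0 ω) (hD1 ω) hle
      (hconsD ω) (hconsY ω)
  calc ∫ ω, κ1 ω * h (Y ω, X ω) ∂P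
      = ∫ ω, (Z ω * (D1 ω * h (Y1 ω, X ω)) / g₀ ω
          - (1 - Z ω) * (D0 ω * h (Y1 ω, X ω)) / (1 - g₀ ω)) ∂P := by
        refine integral_congr_ae ?_
        filter_upwards [hpos] with ω hω
        rw [hκ1]
        exact kappa_mul_eq (fun y => h (y, X ω)) (hZ01 ω) (hD0 ω) (hD1 ω) (hconsD ω) (hconsY ω)
          hω.1.ne' (sub_pos.2 hω.2).ne'
    -- `Y0` enters none of the weighted functions, so it is dropped from the conditioning
    _ = ∫ ω, (D1 ω * h (Y1 ω, X ω) - D0 ω * h (Y1 ω, X ω)) ∂P :=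
        integral_inverse_propensity_weighting hX (hY1m.prodMk (hD0m.prodMk hD1m)) hZm hZ01 hg₀
          hpos (fun φ hφ => hindep (φ ∘ Prod.snd) (hφ.comp measurable_snd)) ha hb hb_int
    _ = ∫ ω, (if D0 ω < D1 ω then h (Y1 ω, X ω) else 0) ∂P := by
        refine integral_congr_ae ?_
        filter_upwards [hmono] with ω hle
        exact mul_sub_mul_eq_ite_lt _ (hD0 ω) (hD1 ω) hle

/-- Abadie's kappa-weighting identity (treated arm):
E[κ¹ h(Y,X)] = E[h(Y(1),X) 1{D(1)>D(0)}]. -/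
theorem stmt5 {Ω 𝓧 : Type*} [MeasurableSpace Ω] [MeasurableSpace 𝓧]
    (P : Measure Ω) [IsProbabilityMeasure P]
    (X : Ω → 𝓧) (hX : Measurable X)
    (Z D D0 D1 Y Y0 Y1 : Ω → ℝ)
    (hZm : Measurable Z) (hD0m : Measurable D0) (hD1m : Measurable D1)
    (hY0m : Measurable Y0) (hY1m : Measurable Y1)
    (hZ01 : ∀ ω, Z ω = 0 ∨ Z ω = 1)
    (hD0 : ∀ ω, D0 ω = 0 ∨ D0 ω = 1) (hD1 : ∀ ω, D1 ω = 0 ∨ D1 ω = 1)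
    (hconsD : ∀ ω, D ω = Z ω * D1 ω + (1 - Z ω) * D0 ω)
    (hconsY : ∀ ω, Y ω = D ω * Y1 ω + (1 - D ω) * Y0 ω)
    (hmono : ∀ᵐ ω ∂P, D0 ω ≤ D1 ω)
    (g₀ : Ω → ℝ) (hg₀ : g₀ =ᵐ[P] P[Z | sigmaX X])
    (hpos : ∀ᵐ ω ∂P, 0 < g₀ ω ∧ g₀ ω < 1)
    -- conditional independence of (Y0, Y1, D0, D1) and Z given X
    (hindep : ∀ φ : ℝ × ℝ × ℝ × ℝ → ℝ, Measurable φ →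
      Integrable (fun ω => φ (Y0 ω, Y1 ω, D0 ω, D1 ω)) P →
      P[fun ω => φ (Y0 ω, Y1 ω, D0 ω, D1 ω) * Z ω | sigmaX X]
        =ᵐ[P] fun ω => (P[fun ω' => φ (Y0 ω', Y1 ω', D0 ω', D1 ω') | sigmaX X]) ω * g₀ ω)
    (κ1 : Ω → ℝ)
    (hκ1 : ∀ ω, κ1 ω = D ω * (Z ω - g₀ ω) / (g₀ ω * (1 - g₀ ω))) :
    ∀ h : ℝ × 𝓧 → ℝ, Measurable h → Integrable (fun ω => h (Y ω, X ω)) P →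
      ∫ ω, κ1 ω * h (Y ω, X ω) ∂P
        = ∫ ω, (if D0 ω < D1 ω then h (Y1 ω, X ω) else 0) ∂P :=
  stmt5_general P X hX Z D D0 D1 Y Y0 Y1 hZm hD0m hD1m hY1m hZ01 hD0 hD1 hconsD hconsY hmono g₀ hg₀
    hpos hindep κ1 hκ1
end

section
/- Under the same setup and assumptions as the kappa-weighting identity (instrument independence given X, positivity of g₀, monotonicity), with κ⁽⁰⁾ = (1-D)((1-Z) - (1-g₀(X)))/(g₀(X)(1-g₀(X))), it holds that for every measurable h with E|h(Y,X)| < ∞, E[κ⁽⁰⁾ h(Y, X)] = E[h(Y(0), X)·1{D(1) > D(0)}]. In particular, taking h ≡ 1 in both kappa identities yields E[κ⁽¹⁾] = E[κ⁽⁰⁾] = P(D(1) > D(0)). -/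
/-!
Let `G = E[Z | X]`. Conditional independence of `Z` and `(Y(0), D(0), D(1))` given `X`, tested on
indicators and extended by a π-λ argument, says that reweighting `P` by `Z` or by `G` (and by
`1 - Z` or by `1 - G`) gives the same law of `Φ = (Y(0), D(0), D(1), X, G)`. Since `G` is a
coordinate of `Φ`, this yields `E[Z F(Φ) / G] = E[F(Φ)] = E[(1 - Z) F(Φ) / (1 - G)]` for every
measurable `F`, integrability included.

By consistency and monotonicity,
`κ⁽⁰⁾ h(Y, X) = (1 - Z) c / (1 - G) + (1 - Z) a / (1 - G) - Z a / G` with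
`c = 1{D(0) < D(1)} h(Y(0), X)` (compliers) and `a = (1 - D(1)) h(Y(0), X)` (never-takers).
Here `a` is dominated by `|h(Y, X)|`, so the never-taker terms are integrable and cancel in
expectation, while the complier term integrates to `E[c]`. Likewise
`κ⁽¹⁾ = Z D(1) / G - (1 - Z) D(0) / (1 - G)` integrates to `E[D(1) - D(0)] = P(D(0) < D(1))`.
-/

open MeasureTheory Real

section WeightedLaw

variable {Ω E : Type*} [MeasurableSpace Ω] [MeasurableSpace E]

/-- Negative values of the weight `f` count as `0`. -/
noncomputable def weightedLaw (P : Measure Ω) (Φ : Ω → E) (f : Ω → ℝ) : Measure E :=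
  (P.withDensity fun ω => ENNReal.ofReal (f ω)).map Φ

variable {P : Measure Ω} {Φ : Ω → E} {f g : Ω → ℝ} {F : E → ℝ}

theorem integral_weightedLaw (hΦ : Measurable Φ) (hf : Measurable f) (hf0 : 0 ≤ᵐ[P] f)
    (hF : Measurable F) : ∫ e, F e ∂weightedLaw P Φ f = ∫ ω, f ω * F (Φ ω) ∂P := by
  rw [weightedLaw, integral_map hΦ.aemeasurable hF.aestronglyMeasurable,
    integral_withDensity_eq_integral_toReal_smul hf.ennreal_ofReal
      (ae_of_all _ fun _ => ENNReal.ofReal_lt_top)]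
  refine integral_congr_ae (hf0.mono fun ω hω => ?_)
  simp [ENNReal.toReal_ofReal hω]

theorem integrable_weightedLaw_iff (hΦ : Measurable Φ) (hf : Measurable f) (hf0 : 0 ≤ᵐ[P] f)
    (hF : Measurable F) :
    Integrable F (weightedLaw P Φ f) ↔ Integrable (fun ω => f ω * F (Φ ω)) P := by
  rw [weightedLaw, integrable_map_measure hF.aestronglyMeasurable hΦ.aemeasurable,
    integrable_withDensity_iff_integrable_smul' hf.ennreal_ofReal
      (ae_of_all _ fun _ => ENNReal.ofReal_lt_top)]
  refine integrable_congr (hf0.mono fun ω hω => ?_)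
  simp [ENNReal.toReal_ofReal hω]

theorem weightedLaw_eq_of_setIntegral_prod_eq {α β : Type*} [MeasurableSpace α]
    [MeasurableSpace β] {Φ : Ω → α × β} (hΦ : Measurable Φ) (hf : Integrable f P)
    (hg : Integrable g P) (hf0 : 0 ≤ᵐ[P] f) (hg0 : 0 ≤ᵐ[P] g)
    (h : ∀ s t, MeasurableSet s → MeasurableSet t →
      ∫ ω in Φ ⁻¹' (s ×ˢ t), f ω ∂P = ∫ ω in Φ ⁻¹' (s ×ˢ t), g ω ∂P) :
    weightedLaw P Φ f = weightedLaw P Φ g := by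
  have := isFiniteMeasure_withDensity_ofReal hf.2
  have : IsFiniteMeasure (weightedLaw P Φ f) := by unfold weightedLaw; infer_instance
  refine Measure.ext_prod fun hs ht => ?_
  simp only [weightedLaw, Measure.map_apply hΦ (hs.prod ht),
    withDensity_apply _ (hΦ (hs.prod ht))]
  rw [← ofReal_integral_eq_lintegral_ofReal hf.restrict (ae_restrict_of_ae hf0),
    ← ofReal_integral_eq_lintegral_ofReal hg.restrict (ae_restrict_of_ae hg0), h _ _ hs ht]

variable {ψ : E → ℝ}

theorem integral_mul_div_eq_of_weightedLaw_eq (hΦ : Measurable Φ) (hf : Measurable f)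
    (hf0 : 0 ≤ᵐ[P] f) (heq : weightedLaw P Φ f = weightedLaw P Φ g) (hψ : Measurable ψ)
    (hgψ : ∀ ω, g ω = ψ (Φ ω)) (hg0 : ∀ᵐ ω ∂P, 0 < g ω)
    (hF : Measurable F) : ∫ ω, f ω * (F (Φ ω) / g ω) ∂P = ∫ ω, F (Φ ω) ∂P := by
  obtain rfl : g = ψ ∘ Φ := funext hgψ
  calc ∫ ω, f ω * (F (Φ ω) / ψ (Φ ω)) ∂P = ∫ e, F e / ψ e ∂weightedLaw P Φ f :=
        (integral_weightedLaw hΦ hf hf0 (hF.div hψ)).symm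
    _ = ∫ ω, ψ (Φ ω) * (F (Φ ω) / ψ (Φ ω)) ∂P := by
        rw [heq, integral_weightedLaw (F := fun e => F e / ψ e) hΦ (hψ.comp hΦ)
          (hg0.mono fun _ h => h.le) (hF.div hψ)]
        rfl
    _ = ∫ ω, F (Φ ω) ∂P := integral_congr_ae (hg0.mono fun ω h => mul_div_cancel₀ _ h.ne')

theorem integrable_mul_div_iff_of_weightedLaw_eq (hΦ : Measurable Φ) (hf : Measurable f)
    (hf0 : 0 ≤ᵐ[P] f) (heq : weightedLaw P Φ f = weightedLaw P Φ g) (hψ : Measurable ψ)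
    (hgψ : ∀ ω, g ω = ψ (Φ ω)) (hg0 : ∀ᵐ ω ∂P, 0 < g ω)
    (hF : Measurable F) :
    Integrable (fun ω => f ω * (F (Φ ω) / g ω)) P ↔ Integrable (fun ω => F (Φ ω)) P := by
  obtain rfl : g = ψ ∘ Φ := funext hgψ
  refine (integrable_weightedLaw_iff (F := fun e => F e / ψ e) hΦ hf hf0
    (hF.div hψ)).symm.trans ?_
  rw [heq, integrable_weightedLaw_iff (F := fun e => F e / ψ e) hΦ (hψ.comp hΦ)
    (hg0.mono fun _ h => h.le) (hF.div hψ)]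
  exact integrable_congr (hg0.mono fun ω h => mul_div_cancel₀ _ h.ne')

end WeightedLaw

theorem integral_add_eq_integral_of_integral_eq_zero {Ω : Type*} [MeasurableSpace Ω]
    {P : Measure Ω} {u v : Ω → ℝ} (hv : Integrable v P) (hv0 : ∫ ω, v ω ∂P = 0) :
    ∫ ω, (u ω + v ω) ∂P = ∫ ω, u ω ∂P := by
  by_cases hu : Integrable u P
  · rw [integral_add hu hv, hv0, add_zero]
  · rw [integral_undef hu, integral_undef ((integrable_add_iff_integrable_left' hv).not.mpr hu)]

section CondExp

variable {Ω : Type*} {m m0 : MeasurableSpace Ω} {P : Measure Ω} {U Z G : Ω → ℝ}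

theorem setIntegral_mul_eq_of_condExp_mul_eq (hm : m ≤ m0) [SigmaFinite (P.trim hm)]
    (hG : StronglyMeasurable[m] G) (hU : Integrable U P) (hUZ : Integrable (U * Z) P)
    (hUG : Integrable (U * G) P) (h : P[U * Z | m] =ᵐ[P] P[U | m] * G) {A : Set Ω}
    (hA : MeasurableSet[m] A) : ∫ ω in A, (U * Z) ω ∂P = ∫ ω in A, (U * G) ω ∂P :=
  calc ∫ ω in A, (U * Z) ω ∂P = ∫ ω in A, P[U * Z | m] ω ∂P := (setIntegral_condExp hm hUZ hA).symm
    _ = ∫ ω in A, P[U * G | m] ω ∂P :=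
        setIntegral_congr_ae (hm A hA) ((h.trans
          (condExp_mul_of_stronglyMeasurable_right hG hUG hU).symm).mono fun _ h _ => h)
    _ = ∫ ω in A, (U * G) ω ∂P := setIntegral_condExp hm hUG hA

theorem condExp_mul_one_sub_eq_of_condExp_mul_eq (hU : Integrable U P)
    (hUZ : Integrable (U * Z) P) (h : P[U * Z | m] =ᵐ[P] P[U | m] * G) :
    P[U * (1 - Z) | m] =ᵐ[P] P[U | m] * (1 - G) := by
  rw [show U * (1 - Z) = U - U * Z by ring]
  filter_upwards [condExp_sub hU hUZ m, h] with ω h₁ h₂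
  simp only [h₁, Pi.sub_apply, h₂, Pi.mul_apply, Pi.one_apply]
  ring

end CondExp

section CondIndep

variable {Ω α β : Type*} {m m0 : MeasurableSpace Ω} [MeasurableSpace α] [MeasurableSpace β]
  {P : Measure Ω} [IsFiniteMeasure P] {V : Ω → α} {W : Ω → β} {Z G : Ω → ℝ}

theorem weightedLaw_eq_of_condExp_indicator_mul_eq (hm : m ≤ m0) (hV : Measurable V)
    (hW : Measurable[m] W) (hZ : Integrable Z P) (hGm : StronglyMeasurable[m] G)
    (hG : Integrable G P) (hZ0 : 0 ≤ᵐ[P] Z) (hG0 : 0 ≤ᵐ[P] G)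
    (h : ∀ s, MeasurableSet s →
      P[(V ⁻¹' s).indicator 1 * Z | m] =ᵐ[P] P[(V ⁻¹' s).indicator 1 | m] * G) :
    weightedLaw P (fun ω => (V ω, W ω)) Z = weightedLaw P (fun ω => (V ω, W ω)) G := by
  refine weightedLaw_eq_of_setIntegral_prod_eq (hV.prodMk (hW.mono hm le_rfl)) hZ hG hZ0 hG0
    fun s t hs ht => ?_
  have hind : ∀ F : Ω → ℝ, (V ⁻¹' s).indicator F = (V ⁻¹' s).indicator 1 * F :=
    fun F => funext fun ω => by by_cases hω : ω ∈ V ⁻¹' s <;> simp [hω]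
  have hU : Integrable ((V ⁻¹' s).indicator (1 : Ω → ℝ)) P :=
    (integrable_const 1).indicator (hV hs)
  rw [Set.mk_preimage_prod, Set.inter_comm, ← setIntegral_indicator (hV hs),
    ← setIntegral_indicator (hV hs), hind Z, hind G]
  exact setIntegral_mul_eq_of_condExp_mul_eq hm hGm hU (hind Z ▸ hZ.indicator (hV hs))
    (hind G ▸ hG.indicator (hV hs)) (h s hs) (hW ht)

end CondIndep

theorem sub_eq_ite_lt_of_le {d₀ d₁ : ℝ} (h₀ : d₀ = 0 ∨ d₀ = 1) (h₁ : d₁ = 0 ∨ d₁ = 1)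
    (hle : d₀ ≤ d₁) : d₁ - d₀ = if d₀ < d₁ then 1 else 0 := by
  rcases h₀ with rfl | rfl <;> rcases h₁ with rfl | rfl <;> norm_num at *

theorem kappa0_mul_eq {z d d₀ d₁ g u u₀ : ℝ} (hz : z = 0 ∨ z = 1) (h₀ : d₀ = 0 ∨ d₀ = 1)
    (h₁ : d₁ = 0 ∨ d₁ = 1) (hle : d₀ ≤ d₁) (hd : d = z * d₁ + (1 - z) * d₀)
    (hu : d = 0 → u = u₀) (hg : 0 < g ∧ g < 1) :
    (1 - d) * ((1 - z) - (1 - g)) / (g * (1 - g)) * u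
      = (1 - z) * ((if d₀ < d₁ then u₀ else 0) / (1 - g))
        + ((1 - z) * ((1 - d₁) * u₀ / (1 - g)) - z * ((1 - d₁) * u₀ / g)) := by
  have hg₀ : g ≠ 0 := hg.1.ne'
  have hg₁ : 1 - g ≠ 0 := by linarith
  subst hd
  rcases hz with rfl | rfl <;> rcases h₀ with rfl | rfl <;> rcases h₁ with rfl | rfl <;>
    norm_num at * <;> rw [hu] <;> field_simp
  ring

theorem kappa1_eq {z d d₀ d₁ g : ℝ} (hz : z = 0 ∨ z = 1) (hd : d = z * d₁ + (1 - z) * d₀)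
    (hg : 0 < g ∧ g < 1) :
    d * (z - g) / (g * (1 - g)) = z * (d₁ / g) - (1 - z) * (d₀ / (1 - g)) := by
  have hg₀ : g ≠ 0 := hg.1.ne'
  have hg₁ : 1 - g ≠ 0 := by linarith
  subst hd
  rcases hz with rfl | rfl <;> field_simp <;> ring

section Kappa

variable {Ω 𝓧 : Type*} [MeasurableSpace Ω] [MeasurableSpace 𝓧] {P : Measure Ω}
  {X : Ω → 𝓧} {Z D D₀ D₁ Y Y₀ Y₁ G : Ω → ℝ}

/-- `G` is carried along so that the inverse-propensity factors `1 / G`, `1 / (1 - G)` are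
functions of it. -/
def strataCovariates (Y₀ D₀ D₁ : Ω → ℝ) (X : Ω → 𝓧) (G : Ω → ℝ) (ω : Ω) :
    (ℝ × ℝ × ℝ) × 𝓧 × ℝ :=
  ((Y₀ ω, D₀ ω, D₁ ω), X ω, G ω)

theorem measurable_strataCovariates (hY₀ : Measurable Y₀) (hD₀ : Measurable D₀)
    (hD₁ : Measurable D₁) (hX : Measurable X) (hG : Measurable G) :
    Measurable (strataCovariates Y₀ D₀ D₁ X G) :=
  (hY₀.prodMk (hD₀.prodMk hD₁)).prodMk (hX.prodMk hG)

theorem integrable_of_forall_eq_zero_or_eq_one [IsFiniteMeasure P] {f : Ω → ℝ}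
    (hf : Measurable f) (h : ∀ ω, f ω = 0 ∨ f ω = 1) : Integrable f P :=
  Integrable.of_bound hf.aestronglyMeasurable 1
    (ae_of_all _ fun ω => by rcases h ω with h | h <;> simp [h])

theorem integral_ite_lt_one_zero (hD₀ : Measurable D₀) (hD₁ : Measurable D₁) :
    ∫ ω, (if D₀ ω < D₁ ω then (1 : ℝ) else 0) ∂P = P.real {ω | D₀ ω < D₁ ω} := by
  rw [← integral_indicator_one (measurableSet_lt hD₀ hD₁)]
  congr 1 with ω

theorem weightedLaw_strataCovariates_eq [IsFiniteMeasure P] {g₀ : Ω → ℝ} (hX : Measurable X)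
    (hZ : Measurable Z) (hY₀ : Measurable Y₀) (hD₀ : Measurable D₀) (hD₁ : Measurable D₁)
    (hZ01 : ∀ ω, Z ω = 0 ∨ Z ω = 1) (hG : G = P[Z | sigmaX X])
    (hG01 : ∀ᵐ ω ∂P, 0 < G ω ∧ G ω < 1) (hg₀ : g₀ =ᵐ[P] G)
    (hindep : ∀ φ : ℝ × ℝ × ℝ × ℝ → ℝ, Measurable φ →
      Integrable (fun ω => φ (Y₀ ω, Y₁ ω, D₀ ω, D₁ ω)) P →
      P[fun ω => φ (Y₀ ω, Y₁ ω, D₀ ω, D₁ ω) * Z ω | sigmaX X]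
        =ᵐ[P] fun ω => (P[fun ω' => φ (Y₀ ω', Y₁ ω', D₀ ω', D₁ ω') | sigmaX X]) ω * g₀ ω) :
    weightedLaw P (strataCovariates Y₀ D₀ D₁ X G) Z
        = weightedLaw P (strataCovariates Y₀ D₀ D₁ X G) G ∧
      weightedLaw P (strataCovariates Y₀ D₀ D₁ X G) (fun ω => 1 - Z ω)
        = weightedLaw P (strataCovariates Y₀ D₀ D₁ X G) (fun ω => 1 - G ω) := by
  have hm : sigmaX X ≤ ‹MeasurableSpace Ω› := hX.comap_le
  have hGm : StronglyMeasurable[sigmaX X] G := hG ▸ stronglyMeasurable_condExp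
  have hGi : Integrable G P := hG ▸ integrable_condExp
  have hZi : Integrable Z P := integrable_of_forall_eq_zero_or_eq_one hZ hZ01
  have hV : Measurable fun ω => (Y₀ ω, D₀ ω, D₁ ω) := hY₀.prodMk (hD₀.prodMk hD₁)
  have hW : Measurable[sigmaX X] fun ω => (X ω, G ω) := (comap_measurable X).prodMk hGm.measurable
  have hU : ∀ s, MeasurableSet s →
      Integrable (((fun ω => (Y₀ ω, D₀ ω, D₁ ω)) ⁻¹' s).indicator (1 : Ω → ℝ)) P :=
    fun s hs => (integrable_const 1).indicator (hV hs)
  have hcond : ∀ s : Set (ℝ × ℝ × ℝ), MeasurableSet s →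
      P[((fun ω => (Y₀ ω, D₀ ω, D₁ ω)) ⁻¹' s).indicator 1 * Z | sigmaX X]
        =ᵐ[P] P[((fun ω => (Y₀ ω, D₀ ω, D₁ ω)) ⁻¹' s).indicator 1 | sigmaX X] * G := by
    intro s hs
    have hφ : Measurable fun q : ℝ × ℝ × ℝ × ℝ =>
        s.indicator (1 : ℝ × ℝ × ℝ → ℝ) (q.1, q.2.2.1, q.2.2.2) :=
      (measurable_one.indicator hs).comp
        (by fun_prop : Measurable fun q : ℝ × ℝ × ℝ × ℝ => (q.1, q.2.2.1, q.2.2.2))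
    filter_upwards [hindep _ hφ (hU s hs), hg₀] with ω h₁ h₂
    rw [Pi.mul_apply, ← h₂]
    exact h₁
  have hZ0 : ∀ ω, 0 ≤ Z ω ∧ Z ω ≤ 1 := fun ω => by rcases hZ01 ω with h | h <;> simp [h]
  constructor
  · exact weightedLaw_eq_of_condExp_indicator_mul_eq hm hV hW hZi hGm hGi
      (ae_of_all _ fun ω => (hZ0 ω).1) (hG01.mono fun ω h => h.1.le) hcond
  · exact weightedLaw_eq_of_condExp_indicator_mul_eq hm hV hW ((integrable_const 1).sub hZi)
      (stronglyMeasurable_const.sub hGm) ((integrable_const 1).sub hGi)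
      (ae_of_all _ fun ω => sub_nonneg.2 (hZ0 ω).2) (hG01.mono fun ω h => sub_nonneg.2 h.2.le)
      fun s hs => condExp_mul_one_sub_eq_of_condExp_mul_eq (hU s hs)
        ((hU s hs).mul_bdd (c := 1) hZ.aestronglyMeasurable
          (ae_of_all _ fun ω => by rcases hZ01 ω with h | h <;> simp [h])) (hcond s hs)

theorem integral_kappa0_mul (hX : Measurable X) (hZ : Measurable Z)
    (hY₀ : Measurable Y₀) (hD₀m : Measurable D₀) (hD₁m : Measurable D₁) (hGm : Measurable G)
    (hZ01 : ∀ ω, Z ω = 0 ∨ Z ω = 1) (hD₀ : ∀ ω, D₀ ω = 0 ∨ D₀ ω = 1)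
    (hD₁ : ∀ ω, D₁ ω = 0 ∨ D₁ ω = 1) (hconsD : ∀ ω, D ω = Z ω * D₁ ω + (1 - Z ω) * D₀ ω)
    (hconsY : ∀ ω, Y ω = D ω * Y₁ ω + (1 - D ω) * Y₀ ω) (hmono : ∀ᵐ ω ∂P, D₀ ω ≤ D₁ ω)
    (hG01 : ∀ᵐ ω ∂P, 0 < G ω ∧ G ω < 1)
    (heq₁ : weightedLaw P (strataCovariates Y₀ D₀ D₁ X G) Z
      = weightedLaw P (strataCovariates Y₀ D₀ D₁ X G) G)
    (heq₀ : weightedLaw P (strataCovariates Y₀ D₀ D₁ X G) (fun ω => 1 - Z ω)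
      = weightedLaw P (strataCovariates Y₀ D₀ D₁ X G) (fun ω => 1 - G ω))
    {h : ℝ × 𝓧 → ℝ} (hh : Measurable h) (hhi : Integrable (fun ω => h (Y ω, X ω)) P) :
    ∫ ω, (1 - D ω) * ((1 - Z ω) - (1 - G ω)) / (G ω * (1 - G ω)) * h (Y ω, X ω) ∂P
      = ∫ ω, (if D₀ ω < D₁ ω then h (Y₀ ω, X ω) else 0) ∂P := by
  set Φ := strataCovariates Y₀ D₀ D₁ X G
  have hΦ : Measurable Φ := measurable_strataCovariates hY₀ hD₀m hD₁m hX hGm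
  let c : (ℝ × ℝ × ℝ) × 𝓧 × ℝ → ℝ := fun e => if e.1.2.1 < e.1.2.2 then h (e.1.1, e.2.1) else 0
  let a : (ℝ × ℝ × ℝ) × 𝓧 × ℝ → ℝ := fun e => (1 - e.1.2.2) * h (e.1.1, e.2.1)
  have hc : Measurable c :=
    Measurable.ite (measurableSet_lt (by fun_prop) (by fun_prop)) (hh.comp (by fun_prop))
      measurable_const
  have ha : Measurable a := (measurable_const.sub (by fun_prop)).mul (hh.comp (by fun_prop))
  have hZ0 : ∀ᵐ ω ∂P, 0 ≤ Z ω := ae_of_all _ fun ω => by rcases hZ01 ω with h | h <;> simp [h]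
  have hZ1 : ∀ᵐ ω ∂P, 0 ≤ 1 - Z ω :=
    ae_of_all _ fun ω => by rcases hZ01 ω with h | h <;> simp [h]
  have hG0 : ∀ᵐ ω ∂P, 0 < G ω := hG01.mono fun ω h => h.1
  have hG1 : ∀ᵐ ω ∂P, 0 < 1 - G ω := hG01.mono fun ω h => sub_pos.2 h.2
  have hai : Integrable (fun ω => a (Φ ω)) P := by
    refine (hhi.bdd_mul (c := 1) (f := fun ω => 1 - D₁ ω)
      (measurable_const.sub hD₁m).aestronglyMeasurable (ae_of_all _ fun ω => ?_)).congr ?_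
    · rcases hD₁ ω with h | h <;> simp [h]
    filter_upwards [hmono] with ω hle
    rcases hD₁ ω with h₁ | h₁
    · have h₀ : D₀ ω = 0 := (hD₀ ω).resolve_right fun h₀ => by linarith
      have hY : Y ω = Y₀ ω := by rw [hconsY ω, hconsD ω, h₀, h₁]; ring
      simp [a, Φ, strataCovariates, hY]
    · simp [a, Φ, strataCovariates, h₁]
  have hv₀ : Integrable (fun ω => (1 - Z ω) * (a (Φ ω) / (1 - G ω))) P :=
    (integrable_mul_div_iff_of_weightedLaw_eq hΦ (measurable_const.sub hZ) hZ1 heq₀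
      (ψ := fun e => 1 - e.2.2) (by fun_prop) (fun _ => rfl) hG1 ha).2 hai
  have hv₁ : Integrable (fun ω => Z ω * (a (Φ ω) / G ω)) P :=
    (integrable_mul_div_iff_of_weightedLaw_eq hΦ hZ hZ0 heq₁ (ψ := fun e => e.2.2)
      (by fun_prop) (fun _ => rfl) hG0 ha).2 hai
  -- `κ⁽⁰⁾ h(Y, X)` itself need not be integrable, so only the never-taker part is split off.
  have hv0 : ∫ ω, ((1 - Z ω) * (a (Φ ω) / (1 - G ω)) - Z ω * (a (Φ ω) / G ω)) ∂P = 0 := by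
    rw [integral_sub hv₀ hv₁, sub_eq_zero]
    exact (integral_mul_div_eq_of_weightedLaw_eq hΦ (measurable_const.sub hZ) hZ1 heq₀
        (ψ := fun e => 1 - e.2.2) (by fun_prop) (fun _ => rfl) hG1 ha).trans
      (integral_mul_div_eq_of_weightedLaw_eq hΦ hZ hZ0 heq₁ (ψ := fun e => e.2.2)
        (by fun_prop) (fun _ => rfl) hG0 ha).symm
  calc ∫ ω, (1 - D ω) * ((1 - Z ω) - (1 - G ω)) / (G ω * (1 - G ω)) * h (Y ω, X ω) ∂P
      = ∫ ω, ((1 - Z ω) * (c (Φ ω) / (1 - G ω))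
          + ((1 - Z ω) * (a (Φ ω) / (1 - G ω)) - Z ω * (a (Φ ω) / G ω))) ∂P := by
        refine integral_congr_ae ?_
        filter_upwards [hmono, hG01] with ω hle hG
        exact kappa0_mul_eq (hZ01 ω) (hD₀ ω) (hD₁ ω) hle (hconsD ω)
          (fun hD => by simp [Φ, strataCovariates, hconsY ω, hD]) hG
    _ = ∫ ω, (1 - Z ω) * (c (Φ ω) / (1 - G ω)) ∂P :=
        integral_add_eq_integral_of_integral_eq_zero (hv₀.sub hv₁) hv0
    _ = ∫ ω, c (Φ ω) ∂P :=
        integral_mul_div_eq_of_weightedLaw_eq hΦ (measurable_const.sub hZ) hZ1 heq₀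
          (ψ := fun e => 1 - e.2.2) (by fun_prop) (fun _ => rfl) hG1 hc

theorem integral_kappa1 [IsFiniteMeasure P] (hX : Measurable X) (hZ : Measurable Z)
    (hY₀ : Measurable Y₀) (hD₀m : Measurable D₀) (hD₁m : Measurable D₁) (hGm : Measurable G)
    (hZ01 : ∀ ω, Z ω = 0 ∨ Z ω = 1) (hD₀ : ∀ ω, D₀ ω = 0 ∨ D₀ ω = 1)
    (hD₁ : ∀ ω, D₁ ω = 0 ∨ D₁ ω = 1) (hconsD : ∀ ω, D ω = Z ω * D₁ ω + (1 - Z ω) * D₀ ω)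
    (hmono : ∀ᵐ ω ∂P, D₀ ω ≤ D₁ ω) (hG01 : ∀ᵐ ω ∂P, 0 < G ω ∧ G ω < 1)
    (heq₁ : weightedLaw P (strataCovariates Y₀ D₀ D₁ X G) Z
      = weightedLaw P (strataCovariates Y₀ D₀ D₁ X G) G)
    (heq₀ : weightedLaw P (strataCovariates Y₀ D₀ D₁ X G) (fun ω => 1 - Z ω)
      = weightedLaw P (strataCovariates Y₀ D₀ D₁ X G) (fun ω => 1 - G ω)) :
    ∫ ω, D ω * (Z ω - G ω) / (G ω * (1 - G ω)) ∂P = P.real {ω | D₀ ω < D₁ ω} := by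
  set Φ := strataCovariates Y₀ D₀ D₁ X G
  have hΦ : Measurable Φ := measurable_strataCovariates hY₀ hD₀m hD₁m hX hGm
  have hZ0 : ∀ᵐ ω ∂P, 0 ≤ Z ω := ae_of_all _ fun ω => by rcases hZ01 ω with h | h <;> simp [h]
  have hZ1 : ∀ᵐ ω ∂P, 0 ≤ 1 - Z ω :=
    ae_of_all _ fun ω => by rcases hZ01 ω with h | h <;> simp [h]
  have hG0 : ∀ᵐ ω ∂P, 0 < G ω := hG01.mono fun ω h => h.1
  have hG1 : ∀ᵐ ω ∂P, 0 < 1 - G ω := hG01.mono fun ω h => sub_pos.2 h.2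
  have hD₀i : Integrable D₀ P := integrable_of_forall_eq_zero_or_eq_one hD₀m hD₀
  have hD₁i : Integrable D₁ P := integrable_of_forall_eq_zero_or_eq_one hD₁m hD₁
  have hF₀ : Measurable fun e : (ℝ × ℝ × ℝ) × 𝓧 × ℝ => e.1.2.1 := by fun_prop
  have hF₁ : Measurable fun e : (ℝ × ℝ × ℝ) × 𝓧 × ℝ => e.1.2.2 := by fun_prop
  have hi₁ : Integrable (fun ω => Z ω * (D₁ ω / G ω)) P :=
    (integrable_mul_div_iff_of_weightedLaw_eq hΦ hZ hZ0 heq₁ (ψ := fun e => e.2.2)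
      (by fun_prop) (fun _ => rfl) hG0 hF₁).2 hD₁i
  have hi₀ : Integrable (fun ω => (1 - Z ω) * (D₀ ω / (1 - G ω))) P :=
    (integrable_mul_div_iff_of_weightedLaw_eq hΦ (measurable_const.sub hZ) hZ1 heq₀
      (ψ := fun e => 1 - e.2.2) (by fun_prop) (fun _ => rfl) hG1 hF₀).2 hD₀i
  have h₁ : ∫ ω, Z ω * (D₁ ω / G ω) ∂P = ∫ ω, D₁ ω ∂P :=
    integral_mul_div_eq_of_weightedLaw_eq (Φ := Φ) hΦ hZ hZ0 heq₁ (ψ := fun e => e.2.2)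
      (by fun_prop) (fun _ => rfl) hG0 hF₁
  have h₀ : ∫ ω, (1 - Z ω) * (D₀ ω / (1 - G ω)) ∂P = ∫ ω, D₀ ω ∂P :=
    integral_mul_div_eq_of_weightedLaw_eq (Φ := Φ) hΦ (measurable_const.sub hZ) hZ1 heq₀
      (ψ := fun e => 1 - e.2.2) (by fun_prop) (fun _ => rfl) hG1 hF₀
  calc ∫ ω, D ω * (Z ω - G ω) / (G ω * (1 - G ω)) ∂P
      = ∫ ω, (Z ω * (D₁ ω / G ω) - (1 - Z ω) * (D₀ ω / (1 - G ω))) ∂P :=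
        integral_congr_ae (hG01.mono fun ω hG => kappa1_eq (hZ01 ω) (hconsD ω) hG)
    _ = ∫ ω, D₁ ω ∂P - ∫ ω, D₀ ω ∂P := by
        rw [integral_sub hi₁ hi₀, h₁, h₀]
    _ = ∫ ω, (if D₀ ω < D₁ ω then (1 : ℝ) else 0) ∂P := by
        rw [← integral_sub hD₁i hD₀i]
        exact integral_congr_ae
          (hmono.mono fun ω hle => sub_eq_ite_lt_of_le (hD₀ ω) (hD₁ ω) hle)
    _ = P.real {ω | D₀ ω < D₁ ω} := integral_ite_lt_one_zero hD₀m hD₁m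

end Kappa

theorem stmt6_general {Ω 𝓧 : Type*} [MeasurableSpace Ω] [MeasurableSpace 𝓧]
    (P : Measure Ω) [IsProbabilityMeasure P]
    (X : Ω → 𝓧) (hX : Measurable X)
    (Z D D0 D1 Y Y0 Y1 : Ω → ℝ)
    (hZm : Measurable Z) (hD0m : Measurable D0) (hD1m : Measurable D1)
    (hY0m : Measurable Y0)
    (hZ01 : ∀ ω, Z ω = 0 ∨ Z ω = 1)
    (hD0 : ∀ ω, D0 ω = 0 ∨ D0 ω = 1) (hD1 : ∀ ω, D1 ω = 0 ∨ D1 ω = 1)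
    (hconsD : ∀ ω, D ω = Z ω * D1 ω + (1 - Z ω) * D0 ω)
    (hconsY : ∀ ω, Y ω = D ω * Y1 ω + (1 - D ω) * Y0 ω)
    (hmono : ∀ᵐ ω ∂P, D0 ω ≤ D1 ω)
    (g₀ : Ω → ℝ) (hg₀ : g₀ =ᵐ[P] P[Z | sigmaX X])
    (hpos : ∀ᵐ ω ∂P, 0 < g₀ ω ∧ g₀ ω < 1)
    -- conditional independence of (Y0, Y1, D0, D1) and Z given X
    (hindep : ∀ φ : ℝ × ℝ × ℝ × ℝ → ℝ, Measurable φ →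
      Integrable (fun ω => φ (Y0 ω, Y1 ω, D0 ω, D1 ω)) P →
      P[fun ω => φ (Y0 ω, Y1 ω, D0 ω, D1 ω) * Z ω | sigmaX X]
        =ᵐ[P] fun ω => (P[fun ω' => φ (Y0 ω', Y1 ω', D0 ω', D1 ω') | sigmaX X]) ω * g₀ ω)
    (κ0 κ1 : Ω → ℝ)
    (hκ0 : ∀ ω, κ0 ω = (1 - D ω) * ((1 - Z ω) - (1 - g₀ ω)) / (g₀ ω * (1 - g₀ ω)))
    (hκ1 : ∀ ω, κ1 ω = D ω * (Z ω - g₀ ω) / (g₀ ω * (1 - g₀ ω))) :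
    (∀ h : ℝ × 𝓧 → ℝ, Measurable h → Integrable (fun ω => h (Y ω, X ω)) P →
      ∫ ω, κ0 ω * h (Y ω, X ω) ∂P
        = ∫ ω, (if D0 ω < D1 ω then h (Y0 ω, X ω) else 0) ∂P) ∧
    (∫ ω, κ1 ω ∂P = (P {ω | D0 ω < D1 ω}).toReal) ∧
    (∫ ω, κ0 ω ∂P = (P {ω | D0 ω < D1 ω}).toReal) := by
  set G := P[Z | sigmaX X] with hG
  have hGm : Measurable G := stronglyMeasurable_condExp.measurable.mono hX.comap_le le_rfl
  have hG01 : ∀ᵐ ω ∂P, 0 < G ω ∧ G ω < 1 := by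
    filter_upwards [hpos, hg₀] with ω h h'
    rwa [← h']
  obtain ⟨heq₁, heq₀⟩ :=
    weightedLaw_strataCovariates_eq hX hZm hY0m hD0m hD1m hZ01 hG hG01 hg₀ hindep
  have hκ0G : ∀ᵐ ω ∂P, κ0 ω = (1 - D ω) * ((1 - Z ω) - (1 - G ω)) / (G ω * (1 - G ω)) := by
    filter_upwards [hg₀] with ω h
    rw [hκ0, h]
  have hκ1G : ∀ᵐ ω ∂P, κ1 ω = D ω * (Z ω - G ω) / (G ω * (1 - G ω)) := by
    filter_upwards [hg₀] with ω h
    rw [hκ1, h]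
  have hκ0h : ∀ h : ℝ × 𝓧 → ℝ, Measurable h → Integrable (fun ω => h (Y ω, X ω)) P →
      ∫ ω, κ0 ω * h (Y ω, X ω) ∂P = ∫ ω, (if D0 ω < D1 ω then h (Y0 ω, X ω) else 0) ∂P :=
    fun h hh hhi => (integral_congr_ae (hκ0G.mono fun ω h' => by rw [h'])).trans
      (integral_kappa0_mul hX hZm hY0m hD0m hD1m hGm hZ01 hD0 hD1 hconsD hconsY hmono hG01
        heq₁ heq₀ hh hhi)
  refine ⟨hκ0h, ?_, ?_⟩
  · rw [integral_congr_ae hκ1G, integral_kappa1 hX hZm hY0m hD0m hD1m hGm hZ01 hD0 hD1 hconsD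
      hmono hG01 heq₁ heq₀, measureReal_def]
  · simpa [integral_ite_lt_one_zero hD0m hD1m, measureReal_def] using
      hκ0h (fun _ => 1) measurable_const (integrable_const 1)

/-- Abadie's kappa-weighting identity (control arm), and the corollary that
E[κ¹] = E[κ⁰] = P(D(1)>D(0)). -/
theorem stmt6 {Ω 𝓧 : Type*} [MeasurableSpace Ω] [MeasurableSpace 𝓧]
    (P : Measure Ω) [IsProbabilityMeasure P]
    (X : Ω → 𝓧) (hX : Measurable X)
    (Z D D0 D1 Y Y0 Y1 : Ω → ℝ)
    (hZm : Measurable Z) (hD0m : Measurable D0) (hD1m : Measurable D1)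
    (hY0m : Measurable Y0) (hY1m : Measurable Y1)
    (hZ01 : ∀ ω, Z ω = 0 ∨ Z ω = 1)
    (hD0 : ∀ ω, D0 ω = 0 ∨ D0 ω = 1) (hD1 : ∀ ω, D1 ω = 0 ∨ D1 ω = 1)
    (hconsD : ∀ ω, D ω = Z ω * D1 ω + (1 - Z ω) * D0 ω)
    (hconsY : ∀ ω, Y ω = D ω * Y1 ω + (1 - D ω) * Y0 ω)
    (hmono : ∀ᵐ ω ∂P, D0 ω ≤ D1 ω)
    (g₀ : Ω → ℝ) (hg₀ : g₀ =ᵐ[P] P[Z | sigmaX X])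
    (hpos : ∀ᵐ ω ∂P, 0 < g₀ ω ∧ g₀ ω < 1)
    -- conditional independence of (Y0, Y1, D0, D1) and Z given X
    (hindep : ∀ φ : ℝ × ℝ × ℝ × ℝ → ℝ, Measurable φ →
      Integrable (fun ω => φ (Y0 ω, Y1 ω, D0 ω, D1 ω)) P →
      P[fun ω => φ (Y0 ω, Y1 ω, D0 ω, D1 ω) * Z ω | sigmaX X]
        =ᵐ[P] fun ω => (P[fun ω' => φ (Y0 ω', Y1 ω', D0 ω', D1 ω') | sigmaX X]) ω * g₀ ω)
    (κ0 κ1 : Ω → ℝ)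
    (hκ0 : ∀ ω, κ0 ω = (1 - D ω) * ((1 - Z ω) - (1 - g₀ ω)) / (g₀ ω * (1 - g₀ ω)))
    (hκ1 : ∀ ω, κ1 ω = D ω * (Z ω - g₀ ω) / (g₀ ω * (1 - g₀ ω))) :
    (∀ h : ℝ × 𝓧 → ℝ, Measurable h → Integrable (fun ω => h (Y ω, X ω)) P →
      ∫ ω, κ0 ω * h (Y ω, X ω) ∂P
        = ∫ ω, (if D0 ω < D1 ω then h (Y0 ω, X ω) else 0) ∂P) ∧
    (∫ ω, κ1 ω ∂P = (P {ω | D0 ω < D1 ω}).toReal) ∧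
    (∫ ω, κ0 ω ∂P = (P {ω | D0 ω < D1 ω}).toReal) :=
  stmt6_general P X hX Z D D0 D1 Y Y0 Y1 hZm hD0m hD1m hY0m hZ01 hD0 hD1 hconsD hconsY hmono g₀ hg₀
    hpos hindep κ0 κ1 hκ0 hκ1
end

section
/- Under the kappa-weighting assumptions, the causal parameter β₀ := E[(Y(1) - Y(0))·1{D(1) > D(0)}] satisfies β₀ = E[(κ⁽¹⁾ - κ⁽⁰⁾)·Y], where κ⁽¹⁾ = D(Z - g₀(X))/(g₀(X)(1-g₀(X))) and κ⁽⁰⁾ = (1-D)((1-Z)-(1-g₀(X)))/(g₀(X)(1-g₀(X))), provided E|Y| < ∞ and E|Y(0)| + E|Y(1)| < ∞. -/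
/-!
Writing `S₁ = D(1)Y(1) + (1 - D(1))Y(0)` and `S₀ = D(0)Y(1) + (1 - D(0))Y(0)`, a binary `Z`
gives pointwise `(κ⁽¹⁾ - κ⁽⁰⁾) Y = Z S₁ / g - (1 - Z) S₀ / (1 - g)`, and monotonicity gives
`S₁ - S₀ = (Y(1) - Y(0)) 1{D(1) > D(0)}`. Conditional independence says
`E[φ(V) Z | X] = E[φ(V) | X] g(X)` for `V = (Y(0), Y(1), D(0), D(1))`, so pulling the
`X`-measurable weight `1 / g` out of the conditional expectation recovers `E[S₁]` and, for
`1 - Z`, `E[S₀]`. Since `g` need not be bounded away from `0`, integrability of `S Z / g` is not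
automatic: it follows from the same pull-out for `|S|`, carried out with Lebesgue integrals of
nonnegative functions, which need no integrability.
-/

open MeasureTheory Set

section PullOut

variable {Ω : Type*} {m m0 : MeasurableSpace Ω} {μ : Measure[m0] Ω}

theorem lintegral_mul_ofReal_condExp (hm : m ≤ m0) [SigmaFinite (μ.trim hm)] {f : Ω → ℝ}
    (hf : Integrable f μ) (hf0 : 0 ≤ᵐ[μ] f) {c : Ω → ENNReal} (hc : Measurable[m] c) :
    ∫⁻ ω, c ω * ENNReal.ofReal (μ[f|m] ω) ∂μ = ∫⁻ ω, c ω * ENNReal.ofReal (f ω) ∂μ := by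
  have htrim : (μ.withDensity fun ω => ENNReal.ofReal (μ[f|m] ω)).trim hm
      = (μ.withDensity fun ω => ENNReal.ofReal (f ω)).trim hm := by
    refine @Measure.ext _ m _ _ fun s hs => ?_
    rw [trim_measurableSet_eq hm hs, trim_measurableSet_eq hm hs,
      withDensity_apply _ (hm s hs), withDensity_apply _ (hm s hs),
      ← ofReal_integral_eq_lintegral_ofReal integrable_condExp.integrableOn
        (ae_restrict_of_ae (condExp_nonneg hf0)),
      ← ofReal_integral_eq_lintegral_ofReal hf.integrableOn (ae_restrict_of_ae hf0),
      setIntegral_condExp hm hf hs]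
  have hdensity (g : Ω → ℝ) (hg : AEMeasurable g μ) :
      ∫⁻ ω, c ω * ENNReal.ofReal (g ω) ∂μ
        = ∫⁻ ω, c ω ∂(μ.withDensity fun ω => ENNReal.ofReal (g ω)).trim hm := by
    rw [lintegral_trim hm hc, lintegral_withDensity_eq_lintegral_mul₀ hg.ennreal_ofReal
      (hc.mono hm le_rfl).aemeasurable]
    simp only [Pi.mul_apply, mul_comm]
  rw [hdensity _ integrable_condExp.aemeasurable, htrim, hdensity _ hf.aemeasurable]

theorem integrable_mul_of_integrable_mul_condExp (hm : m ≤ m0) [SigmaFinite (μ.trim hm)]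
    {f c : Ω → ℝ} (hf : Integrable f μ) (hf0 : 0 ≤ᵐ[μ] f) (hc : StronglyMeasurable[m] c)
    (hc0 : 0 ≤ᵐ[μ] c) (hcf : Integrable (fun ω => c ω * μ[f|m] ω) μ) :
    Integrable (fun ω => c ω * f ω) μ := by
  have hofReal_mul (g : Ω → ℝ) : (fun ω => ENNReal.ofReal (c ω * g ω))
      =ᵐ[μ] fun ω => ENNReal.ofReal (c ω) * ENNReal.ofReal (g ω) := by
    filter_upwards [hc0] with ω hω using ENNReal.ofReal_mul hω
  refine ⟨(hc.mono hm).aestronglyMeasurable.mul hf.1, ?_⟩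
  have hcE0 : 0 ≤ᵐ[μ] fun ω => c ω * μ[f|m] ω := by
    filter_upwards [hc0, condExp_nonneg (m := m) hf0] with ω h1 h2 using mul_nonneg h1 h2
  have hcf0 : 0 ≤ᵐ[μ] fun ω => c ω * f ω := by
    filter_upwards [hc0, hf0] with ω h1 h2 using mul_nonneg h1 h2
  have hfin := hcf.2
  rw [hasFiniteIntegral_iff_ofReal hcE0, lintegral_congr_ae (hofReal_mul _),
    lintegral_mul_ofReal_condExp hm hf hf0 (c := fun ω => ENNReal.ofReal (c ω))
      (ENNReal.measurable_ofReal.comp hc.measurable)]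
    at hfin
  rwa [hasFiniteIntegral_iff_ofReal hcf0, lintegral_congr_ae (hofReal_mul _)]

theorem integral_mul_eq_integral_mul_condExp (hm : m ≤ m0) [SigmaFinite (μ.trim hm)]
    {f c : Ω → ℝ} (hf : Integrable f μ) (hc : StronglyMeasurable[m] c)
    (hcf : Integrable (fun ω => c ω * f ω) μ) :
    ∫ ω, c ω * f ω ∂μ = ∫ ω, c ω * μ[f|m] ω ∂μ := by
  rw [← integral_condExp hm]
  exact integral_congr_ae (condExp_mul_of_stronglyMeasurable_left hc hcf hf)

end PullOut

theorem MeasureTheory.Integrable.mul_of_mem_Icc {Ω : Type*} [MeasurableSpace Ω] {μ : Measure Ω}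
    {W Z : Ω → ℝ} (hW : Integrable W μ) (hZ : Measurable Z) (hZ01 : ∀ ω, Z ω ∈ Icc 0 1) :
    Integrable (fun ω => W ω * Z ω) μ :=
  hW.mul_bdd hZ.aestronglyMeasurable
    (ae_of_all _ fun ω => abs_le.2 ⟨by linarith [(hZ01 ω).1], (hZ01 ω).2⟩)

section Propensity

variable {Ω β : Type*} [MeasurableSpace β] {m m0 : MeasurableSpace Ω} {μ : Measure[m0] Ω}
  {V : Ω → β} {Z g : Ω → ℝ}

/-- For a binary `Z` and `g = μ[Z|m]` this is conditional independence of `V` and `Z`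
given `m`. -/
def IsPropensityScore (m : MeasurableSpace Ω) (μ : Measure[m0] Ω) (V : Ω → β) (Z g : Ω → ℝ) :
    Prop :=
  ∀ φ : β → ℝ, Measurable φ → Integrable (fun ω => φ (V ω)) μ →
    μ[fun ω => φ (V ω) * Z ω | m] =ᵐ[μ] fun ω => μ[fun ω => φ (V ω) | m] ω * g ω

namespace IsPropensityScore

theorem congr_ae {g' : Ω → ℝ} (h : IsPropensityScore m μ V Z g) (hg : g =ᵐ[μ] g') :
    IsPropensityScore m μ V Z g' := fun φ hφ hφV => by
  filter_upwards [h φ hφ hφV, hg] with ω hω hgω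
  rw [hω, hgω]

theorem one_sub (h : IsPropensityScore m μ V Z g) (hZ : Measurable Z)
    (hZ01 : ∀ ω, Z ω ∈ Icc 0 1) :
    IsPropensityScore m μ V (fun ω => 1 - Z ω) (fun ω => 1 - g ω) := fun φ hφ hφV => by
  have hsplit : (fun ω => φ (V ω) * (1 - Z ω)) = (fun ω => φ (V ω)) - fun ω => φ (V ω) * Z ω :=
    funext fun ω => mul_one_sub _ _
  rw [hsplit]
  filter_upwards [condExp_sub hφV (hφV.mul_of_mem_Icc hZ hZ01) m, h φ hφ hφV] with ω hω hZω
  rw [hω, Pi.sub_apply, hZω, mul_one_sub]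

theorem integrable_mul_div (hm : m ≤ m0) [SigmaFinite (μ.trim hm)]
    (h : IsPropensityScore m μ V Z g) (hZ : Measurable Z) (hZ01 : ∀ ω, Z ω ∈ Icc 0 1)
    (hg : StronglyMeasurable[m] g) (hg0 : ∀ᵐ ω ∂μ, 0 < g ω) {φ : β → ℝ} (hφ : Measurable φ)
    (hφV : Integrable (fun ω => φ (V ω)) μ) :
    Integrable (fun ω => φ (V ω) * Z ω / g ω) μ := by
  have habs : Integrable (fun ω => (g ω)⁻¹ * (|φ (V ω)| * Z ω)) μ := by
    refine integrable_mul_of_integrable_mul_condExp hm (hφV.abs.mul_of_mem_Icc hZ hZ01)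
      (ae_of_all _ fun ω => mul_nonneg (abs_nonneg _) (hZ01 ω).1)
      hg.measurable.inv.stronglyMeasurable (hg0.mono fun ω hω => (inv_pos.2 hω).le) ?_
    refine (integrable_condExp (m := m) (f := fun ω => |φ (V ω)|)).congr ?_
    filter_upwards [h _ hφ.abs hφV.abs, hg0] with ω hω hgω
    rw [hω]
    field_simp
  refine habs.mono' ((hφV.1.aemeasurable).mul hZ.aemeasurable
    |>.div (hg.mono hm).measurable.aemeasurable).aestronglyMeasurable ?_
  filter_upwards [hg0] with ω hgω
  rw [Real.norm_eq_abs, abs_div, abs_mul, abs_of_nonneg (hZ01 ω).1, abs_of_pos hgω,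
    div_eq_inv_mul]

theorem integral_mul_div (hm : m ≤ m0) [SigmaFinite (μ.trim hm)]
    (h : IsPropensityScore m μ V Z g) (hZ : Measurable Z) (hZ01 : ∀ ω, Z ω ∈ Icc 0 1)
    (hg : StronglyMeasurable[m] g) (hg0 : ∀ᵐ ω ∂μ, 0 < g ω) {φ : β → ℝ} (hφ : Measurable φ)
    (hφV : Integrable (fun ω => φ (V ω)) μ) :
    ∫ ω, φ (V ω) * Z ω / g ω ∂μ = ∫ ω, φ (V ω) ∂μ := by
  have hint := h.integrable_mul_div hm hZ hZ01 hg hg0 hφ hφV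
  simp only [div_eq_inv_mul] at hint ⊢
  calc ∫ ω, (g ω)⁻¹ * (φ (V ω) * Z ω) ∂μ
      = ∫ ω, (g ω)⁻¹ * μ[fun ω => φ (V ω) * Z ω | m] ω ∂μ :=
        integral_mul_eq_integral_mul_condExp hm (hφV.mul_of_mem_Icc hZ hZ01)
          hg.measurable.inv.stronglyMeasurable hint
    _ = ∫ ω, μ[fun ω => φ (V ω) | m] ω ∂μ := by
        refine integral_congr_ae ?_
        filter_upwards [h φ hφ hφV, hg0] with ω hω hgω
        rw [hω]
        field_simp
    _ = ∫ ω, φ (V ω) ∂μ := integral_condExp hm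

theorem integral_mul_div_sub_mul_div (hm : m ≤ m0) [SigmaFinite (μ.trim hm)]
    (h : IsPropensityScore m μ V Z g) (hZ : Measurable Z) (hZ01 : ∀ ω, Z ω ∈ Icc 0 1)
    (hg : StronglyMeasurable[m] g) (hg01 : ∀ᵐ ω ∂μ, 0 < g ω ∧ g ω < 1) {φ₁ φ₀ : β → ℝ}
    (hφ₁ : Measurable φ₁) (hφ₀ : Measurable φ₀) (hφ₁V : Integrable (fun ω => φ₁ (V ω)) μ)
    (hφ₀V : Integrable (fun ω => φ₀ (V ω)) μ) :
    ∫ ω, (φ₁ (V ω) * Z ω / g ω - φ₀ (V ω) * (1 - Z ω) / (1 - g ω)) ∂μ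
      = ∫ ω, (φ₁ (V ω) - φ₀ (V ω)) ∂μ := by
  have hg0 : ∀ᵐ ω ∂μ, 0 < g ω := hg01.mono fun _ h => h.1
  have hg1 : ∀ᵐ ω ∂μ, 0 < 1 - g ω := hg01.mono fun _ h => sub_pos.2 h.2
  have hZ01' : ∀ ω, 1 - Z ω ∈ Icc 0 1 := fun ω => ⟨sub_nonneg.2 (hZ01 ω).2,
    sub_le_self _ (hZ01 ω).1⟩
  have h' := h.one_sub hZ hZ01
  have hZ' : Measurable fun ω => 1 - Z ω := measurable_const.sub hZ
  have hg' : StronglyMeasurable[m] fun ω => 1 - g ω := stronglyMeasurable_const.sub hg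
  rw [integral_sub (h.integrable_mul_div hm hZ hZ01 hg hg0 hφ₁ hφ₁V)
      (h'.integrable_mul_div hm hZ' hZ01' hg' hg1 hφ₀ hφ₀V),
    integral_sub hφ₁V hφ₀V, h.integral_mul_div hm hZ hZ01 hg hg0 hφ₁ hφ₁V,
    h'.integral_mul_div hm hZ' hZ01' hg' hg1 hφ₀ hφ₀V]

end IsPropensityScore

end Propensity

theorem kappa_weight_sub_mul_eq {z d0 d1 y0 y1 g : ℝ} (hz : z = 0 ∨ z = 1) (hg0 : g ≠ 0)
    (hg1 : 1 - g ≠ 0) :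
    ((z * d1 + (1 - z) * d0) * (z - g) / (g * (1 - g))
        - (1 - (z * d1 + (1 - z) * d0)) * ((1 - z) - (1 - g)) / (g * (1 - g)))
      * ((z * d1 + (1 - z) * d0) * y1 + (1 - (z * d1 + (1 - z) * d0)) * y0)
      = (d1 * y1 + (1 - d1) * y0) * z / g - (d0 * y1 + (1 - d0) * y0) * (1 - z) / (1 - g) := by
  rcases hz with rfl | rfl <;> field_simp <;> ring

theorem potentialOutcome_sub_eq_ite {d0 d1 y0 y1 : ℝ} (hd0 : d0 = 0 ∨ d0 = 1)
    (hd1 : d1 = 0 ∨ d1 = 1) (hmono : d0 ≤ d1) :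
    (d1 * y1 + (1 - d1) * y0) - (d0 * y1 + (1 - d0) * y0)
      = if d0 < d1 then y1 - y0 else 0 := by
  rcases hd0 with rfl | rfl <;> rcases hd1 with rfl | rfl <;> norm_num at *

theorem integrable_potentialOutcome {Ω : Type*} [MeasurableSpace Ω] {μ : Measure Ω}
    {d y0 y1 : Ω → ℝ} (hd : Measurable d) (hd01 : ∀ ω, d ω = 0 ∨ d ω = 1)
    (hy0 : Integrable y0 μ) (hy1 : Integrable y1 μ) :
    Integrable (fun ω => d ω * y1 ω + (1 - d ω) * y0 ω) μ := by
  have hbound : ∀ ω, ‖d ω‖ ≤ 1 ∧ ‖1 - d ω‖ ≤ 1 := fun ω => by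
    rcases hd01 ω with h | h <;> simp [h]
  exact (hy1.bdd_mul hd.aestronglyMeasurable (ae_of_all _ fun ω => (hbound ω).1)).add
    (hy0.bdd_mul (measurable_const.sub hd).aestronglyMeasurable
      (ae_of_all _ fun ω => (hbound ω).2))

theorem stmt7_general {Ω 𝓧 : Type*} [MeasurableSpace Ω] [MeasurableSpace 𝓧]
    (P : Measure Ω) [IsProbabilityMeasure P]
    (X : Ω → 𝓧) (hX : Measurable X)
    (Z D D0 D1 Y Y0 Y1 : Ω → ℝ)
    (hZm : Measurable Z) (hD0m : Measurable D0) (hD1m : Measurable D1)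
    (hZ01 : ∀ ω, Z ω = 0 ∨ Z ω = 1)
    (hD0 : ∀ ω, D0 ω = 0 ∨ D0 ω = 1) (hD1 : ∀ ω, D1 ω = 0 ∨ D1 ω = 1)
    (hconsD : ∀ ω, D ω = Z ω * D1 ω + (1 - Z ω) * D0 ω)
    (hconsY : ∀ ω, Y ω = D ω * Y1 ω + (1 - D ω) * Y0 ω)
    (hmono : ∀ᵐ ω ∂P, D0 ω ≤ D1 ω)
    (hY0int : Integrable Y0 P) (hY1int : Integrable Y1 P)
    (g₀ : Ω → ℝ) (hg₀ : g₀ =ᵐ[P] P[Z | sigmaX X])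
    (hpos : ∀ᵐ ω ∂P, 0 < g₀ ω ∧ g₀ ω < 1)
    -- conditional independence of (Y0, Y1, D0, D1) and Z given X
    (hindep : ∀ φ : ℝ × ℝ × ℝ × ℝ → ℝ, Measurable φ →
      Integrable (fun ω => φ (Y0 ω, Y1 ω, D0 ω, D1 ω)) P →
      P[fun ω => φ (Y0 ω, Y1 ω, D0 ω, D1 ω) * Z ω | sigmaX X]
        =ᵐ[P] fun ω => (P[fun ω' => φ (Y0 ω', Y1 ω', D0 ω', D1 ω') | sigmaX X]) ω * g₀ ω)
    (κ0 κ1 : Ω → ℝ)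
    (hκ0 : ∀ ω, κ0 ω = (1 - D ω) * ((1 - Z ω) - (1 - g₀ ω)) / (g₀ ω * (1 - g₀ ω)))
    (hκ1 : ∀ ω, κ1 ω = D ω * (Z ω - g₀ ω) / (g₀ ω * (1 - g₀ ω)))
    (β₀ : ℝ)
    (hβ₀ : β₀ = ∫ ω, (if D0 ω < D1 ω then Y1 ω - Y0 ω else 0) ∂P) :
    β₀ = ∫ ω, (κ1 ω - κ0 ω) * Y ω ∂P := by
  have hm : sigmaX X ≤ ‹MeasurableSpace Ω› := hX.comap_le
  set G := P[Z | sigmaX X]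
  set V : Ω → ℝ × ℝ × ℝ × ℝ := fun ω => (Y0 ω, Y1 ω, D0 ω, D1 ω)
  set φ₁ : ℝ × ℝ × ℝ × ℝ → ℝ := fun p => p.2.2.2 * p.2.1 + (1 - p.2.2.2) * p.1
  set φ₀ : ℝ × ℝ × ℝ × ℝ → ℝ := fun p => p.2.2.1 * p.2.1 + (1 - p.2.2.1) * p.1
  have hG : ∀ᵐ ω ∂P, 0 < G ω ∧ G ω < 1 := by
    filter_upwards [hpos, hg₀] with ω hω hgω
    rwa [← hgω]
  have hprop : IsPropensityScore (sigmaX X) P V Z G := IsPropensityScore.congr_ae hindep hg₀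
  have hκY : (fun ω => (κ1 ω - κ0 ω) * Y ω)
      =ᵐ[P] fun ω => φ₁ (V ω) * Z ω / G ω - φ₀ (V ω) * (1 - Z ω) / (1 - G ω) := by
    filter_upwards [hG, hg₀] with ω hGω hgω
    rw [hκ1, hκ0, hconsY, hconsD, hgω]
    exact kappa_weight_sub_mul_eq (hZ01 ω) hGω.1.ne' (sub_pos.2 hGω.2).ne'
  have hcompliers : (fun ω => φ₁ (V ω) - φ₀ (V ω))
      =ᵐ[P] fun ω => if D0 ω < D1 ω then Y1 ω - Y0 ω else 0 := by
    filter_upwards [hmono] with ω hω using potentialOutcome_sub_eq_ite (hD0 ω) (hD1 ω) hω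
  rw [hβ₀, integral_congr_ae hκY, ← integral_congr_ae hcompliers,
    hprop.integral_mul_div_sub_mul_div hm hZm
      (fun ω => by rcases hZ01 ω with h | h <;> simp [h]) stronglyMeasurable_condExp hG
      (by fun_prop) (by fun_prop) (integrable_potentialOutcome hD1m hD1 hY0int hY1int)
      (integrable_potentialOutcome hD0m hD0 hY0int hY1int)]

/-- Moment identification of the complier-weighted causal parameter:
β₀ = E[(Y(1)-Y(0)) 1{D(1)>D(0)}] = E[(κ¹ - κ⁰) Y]. -/
theorem stmt7 {Ω 𝓧 : Type*} [MeasurableSpace Ω] [MeasurableSpace 𝓧]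
    (P : Measure Ω) [IsProbabilityMeasure P]
    (X : Ω → 𝓧) (hX : Measurable X)
    (Z D D0 D1 Y Y0 Y1 : Ω → ℝ)
    (hZm : Measurable Z) (hD0m : Measurable D0) (hD1m : Measurable D1)
    (hY0m : Measurable Y0) (hY1m : Measurable Y1)
    (hZ01 : ∀ ω, Z ω = 0 ∨ Z ω = 1)
    (hD0 : ∀ ω, D0 ω = 0 ∨ D0 ω = 1) (hD1 : ∀ ω, D1 ω = 0 ∨ D1 ω = 1)
    (hconsD : ∀ ω, D ω = Z ω * D1 ω + (1 - Z ω) * D0 ω)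
    (hconsY : ∀ ω, Y ω = D ω * Y1 ω + (1 - D ω) * Y0 ω)
    (hmono : ∀ᵐ ω ∂P, D0 ω ≤ D1 ω)
    (hYint : Integrable Y P) (hY0int : Integrable Y0 P) (hY1int : Integrable Y1 P)
    (g₀ : Ω → ℝ) (hg₀ : g₀ =ᵐ[P] P[Z | sigmaX X])
    (hpos : ∀ᵐ ω ∂P, 0 < g₀ ω ∧ g₀ ω < 1)
    -- conditional independence of (Y0, Y1, D0, D1) and Z given X
    (hindep : ∀ φ : ℝ × ℝ × ℝ × ℝ → ℝ, Measurable φ →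
      Integrable (fun ω => φ (Y0 ω, Y1 ω, D0 ω, D1 ω)) P →
      P[fun ω => φ (Y0 ω, Y1 ω, D0 ω, D1 ω) * Z ω | sigmaX X]
        =ᵐ[P] fun ω => (P[fun ω' => φ (Y0 ω', Y1 ω', D0 ω', D1 ω') | sigmaX X]) ω * g₀ ω)
    (κ0 κ1 : Ω → ℝ)
    (hκ0 : ∀ ω, κ0 ω = (1 - D ω) * ((1 - Z ω) - (1 - g₀ ω)) / (g₀ ω * (1 - g₀ ω)))
    (hκ1 : ∀ ω, κ1 ω = D ω * (Z ω - g₀ ω) / (g₀ ω * (1 - g₀ ω)))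
    (β₀ : ℝ)
    (hβ₀ : β₀ = ∫ ω, (if D0 ω < D1 ω then Y1 ω - Y0 ω else 0) ∂P) :
    β₀ = ∫ ω, (κ1 ω - κ0 ω) * Y ω ∂P :=
  stmt7_general P X hX Z D D0 D1 Y Y0 Y1 hZm hD0m hD1m hZ01 hD0 hD1 hconsD hconsY hmono hY0int
    hY1int g₀ hg₀ hpos hindep κ0 κ1 hκ0 hκ1 β₀ hβ₀
end

section
/- Let D, Z ∈ {0,1} and X be random variables with (D(0), D(1)) ⫫ Z | X, D = Z D(1) + (1-Z) D(0), 0 < g₀(X) = P(Z=1|X) < 1 a.s., and P(D(1) ≥ D(0) | X) = 1. Define Abadie's kappa κ = 1 - D(1-Z)/(1 - g₀(X)) - (1-D)Z/g₀(X). Then E[κ | X] = P(D(1) > D(0) | X) almost surely, and in particular E[κ] = P(D(1) > D(0)). -/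
/-!
Since `Z` is binary and `D = Z D(1) + (1 - Z) D(0)`, the two weighted terms of `κ` are
`D(0) (1 - Z) / (1 - g₀)` and `(1 - D(1)) Z / g₀`. Conditional independence gives
`E[D(0) (1 - Z) | X] = E[D(0) | X] (1 - g₀)` and `E[(1 - D(1)) Z | X] = E[1 - D(1) | X] g₀`,
and the weights `1 / (1 - g₀)`, `1 / g₀` are `X`-measurable, so they can be pulled out of the
conditional expectation: `E[κ | X] = 1 - E[D(0) | X] - E[1 - D(1) | X] = E[D(1) - D(0) | X]`.
By monotonicity `D(1) - D(0)` is the complier indicator. The weights are unbounded, so the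
pull-out needs the integrability of the weighted terms; it comes from truncating the weight and
monotone convergence.
-/

open MeasureTheory Real

open Filter Topology

theorem binary_mul {a b : ℝ} (ha : a = 0 ∨ a = 1) (hb : b = 0 ∨ b = 1) :
    a * b = 0 ∨ a * b = 1 := by
  rcases ha with rfl | rfl <;> simp [hb]

theorem binary_one_sub {a : ℝ} (ha : a = 0 ∨ a = 1) : 1 - a = 0 ∨ 1 - a = 1 := by
  rcases ha with rfl | rfl <;> simp

theorem nonneg_of_binary {a : ℝ} (ha : a = 0 ∨ a = 1) : 0 ≤ a := by
  rcases ha with rfl | rfl <;> simp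

theorem min_abs_one_of_binary {x : ℝ} (hx : x = 0 ∨ x = 1) : min |x| 1 = x := by
  rcases hx with h | h <;> simp [h]

theorem abs_min_abs_one_le (x : ℝ) : |min |x| 1| ≤ 1 := by
  rw [abs_of_nonneg (le_min (abs_nonneg x) zero_le_one)]
  exact min_le_right _ _

theorem abadie_kappa_eq {d z d₀ d₁ g : ℝ} (hz : z = 0 ∨ z = 1)
    (hd : d = z * d₁ + (1 - z) * d₀) :
    1 - d * (1 - z) / (1 - g) - (1 - d) * z / g =
      1 - d₀ * (1 - z) / (1 - g) - (1 - d₁) * z / g := by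
  rcases hz with rfl | rfl <;> simp [hd]

theorem ite_lt_eq_one_sub_sub_one_sub {a b : ℝ} (ha : a = 0 ∨ a = 1) (hb : b = 0 ∨ b = 1)
    (hab : a ≤ b) : (if a < b then (1 : ℝ) else 0) = 1 - a - (1 - b) := by
  rcases ha with rfl | rfl <;> rcases hb with rfl | rfl <;> norm_num at *

namespace MeasureTheory

variable {Ω : Type*} {m m0 : MeasurableSpace Ω} {μ : Measure[m0] Ω}

theorem integrable_of_binary [IsFiniteMeasure μ] {f : Ω → ℝ} (hf : Measurable f)
    (h01 : ∀ ω, f ω = 0 ∨ f ω = 1) : Integrable f μ :=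
  .of_bound hf.aestronglyMeasurable 1
    (ae_of_all _ fun ω => by rcases h01 ω with h | h <;> simp [h])

theorem integrable_mul_of_integrable_mul_condExp (hm : m ≤ m0) [SigmaFinite (μ.trim hm)]
    {c f : Ω → ℝ} (hc : StronglyMeasurable[m] c) (hc0 : 0 ≤ᵐ[μ] c) (hf : Integrable f μ)
    (hf0 : 0 ≤ᵐ[μ] f) (hcf : Integrable (c * μ[f|m]) μ) : Integrable (c * f) μ := by
  set cₙ : ℕ → Ω → ℝ := fun n ω => min (c ω) n
  have hcₙ (n : ℕ) : StronglyMeasurable[m] (cₙ n) :=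
    (hc.measurable.min measurable_const).stronglyMeasurable
  have hcₙ0 (n : ℕ) : 0 ≤ᵐ[μ] cₙ n := by
    filter_upwards [hc0] with ω h using le_min h n.cast_nonneg
  have hcₙf (n : ℕ) : Integrable (cₙ n * f) μ := by
    refine hf.bdd_mul (c := n) ((hcₙ n).mono hm).aestronglyMeasurable ?_
    filter_upwards [hcₙ0 n] with ω h
    rw [Real.norm_of_nonneg h]
    exact min_le_right _ _
  have hbound (n : ℕ) : ∫ ω, (cₙ n * f) ω ∂μ ≤ ∫ ω, (c * μ[f|m]) ω ∂μ := by
    rw [← integral_condExp hm]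
    refine integral_mono_ae integrable_condExp hcf ?_
    filter_upwards [condExp_mul_of_stronglyMeasurable_left (hcₙ n) (hcₙf n) hf,
      condExp_nonneg (m := m) hf0] with ω hpull hpos
    rw [hpull]
    exact mul_le_mul_of_nonneg_right (min_le_left _ _) hpos
  have hmct : Tendsto (fun n => ∫⁻ ω, ENNReal.ofReal ((cₙ n * f) ω) ∂μ) atTop
      (𝓝 (∫⁻ ω, ENNReal.ofReal ((c * f) ω) ∂μ)) := by
    refine lintegral_tendsto_of_tendsto_of_monotone
      (fun n => (hcₙf n).aemeasurable.ennreal_ofReal) ?_ (ae_of_all _ fun ω => ?_)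
    · filter_upwards [hf0] with ω h n k hnk
      exact ENNReal.ofReal_le_ofReal
        (mul_le_mul_of_nonneg_right (min_le_min_left _ (Nat.cast_le.2 hnk)) h)
    · refine tendsto_atTop_of_eventually_const (i₀ := ⌈c ω⌉₊) fun n hn => ?_
      simp only [cₙ, Pi.mul_apply, min_eq_left ((Nat.le_ceil _).trans (Nat.cast_le.2 hn))]
  refine ⟨(hc.mono hm).aestronglyMeasurable.mul hf.1, ?_⟩
  rw [hasFiniteIntegral_iff_ofReal
    (by filter_upwards [hc0, hf0] with ω h1 h2 using mul_nonneg h1 h2)]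
  refine (le_of_tendsto' hmct fun n => ?_).trans_lt
    (ENNReal.ofReal_lt_top (r := ∫ ω, (c * μ[f|m]) ω ∂μ))
  rw [← ofReal_integral_eq_lintegral_ofReal (hcₙf n)
    (by filter_upwards [hcₙ0 n, hf0] with ω h1 h2 using mul_nonneg h1 h2)]
  exact ENNReal.ofReal_le_ofReal (hbound n)

theorem integrable_div_and_condExp_div_of_condExp_eq_mul (hm : m ≤ m0)
    [SigmaFinite (μ.trim hm)] {f h e : Ω → ℝ} (hh : AEStronglyMeasurable[m] h μ)
    (hh0 : ∀ᵐ ω ∂μ, 0 < h ω) (hf : Integrable f μ) (hf0 : 0 ≤ᵐ[μ] f) (he : Integrable e μ)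
    (hfe : μ[f|m] =ᵐ[μ] e * h) :
    Integrable (f / h) μ ∧ μ[f / h|m] =ᵐ[μ] e := by
  obtain ⟨h', hh', hhh'⟩ := hh
  have hinv : StronglyMeasurable[m] h'⁻¹ := hh'.measurable.inv.stronglyMeasurable
  have hcancel : h'⁻¹ * μ[f|m] =ᵐ[μ] e := by
    filter_upwards [hfe, hh0, hhh'] with ω hω hpos hω'
    simp only [Pi.mul_apply, Pi.inv_apply, hω, ← hω']
    field_simp
  have hint : Integrable (h'⁻¹ * f) μ :=
    integrable_mul_of_integrable_mul_condExp hm hinv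
      (by filter_upwards [hh0, hhh'] with ω hω hω' using (inv_pos.2 (hω' ▸ hω)).le) hf hf0
      (he.congr hcancel.symm)
  have hdiv : f / h =ᵐ[μ] h'⁻¹ * f := by
    filter_upwards [hhh'] with ω hω'
    simp only [Pi.div_apply, Pi.mul_apply, Pi.inv_apply, hω', div_eq_inv_mul]
  exact ⟨hint.congr hdiv.symm, (condExp_congr_ae hdiv).trans
    ((condExp_mul_of_stronglyMeasurable_left hinv hint hf).trans hcancel)⟩

theorem condExp_one_sub_sub [IsFiniteMeasure μ] (hm : m ≤ m0) {f g : Ω → ℝ}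
    (hf : Integrable f μ) (hg : Integrable g μ) :
    μ[fun ω => 1 - f ω - g ω|m] =ᵐ[μ] fun ω => 1 - μ[f|m] ω - μ[g|m] ω := by
  change μ[(fun _ => (1 : ℝ)) - f - g|m] =ᵐ[μ] _
  filter_upwards [condExp_sub ((integrable_const 1).sub hf) hg m,
    condExp_sub (integrable_const 1) hf m] with ω h1 h2
  rw [h1, Pi.sub_apply, h2, condExp_const hm, Pi.sub_apply]

theorem condExp_mul_one_sub_of_condExp_mul {Y Z g : Ω → ℝ}
    (hY : Integrable Y μ) (hYZ : Integrable (Y * Z) μ) (h : μ[Y * Z|m] =ᵐ[μ] μ[Y|m] * g) :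
    μ[Y * (1 - Z)|m] =ᵐ[μ] μ[Y|m] * (1 - g) := by
  rw [mul_one_sub]
  filter_upwards [condExp_sub hY hYZ m, h] with ω h1 h2
  simp only [Pi.sub_apply, Pi.mul_apply, Pi.one_apply, h1, h2]
  ring

theorem condExp_one_sub_div_sub_div [IsFiniteMeasure μ] (hm : m ≤ m0) {A B a b g : Ω → ℝ}
    (hg : AEStronglyMeasurable[m] g μ) (hg01 : ∀ᵐ ω ∂μ, 0 < g ω ∧ g ω < 1)
    (hA : Integrable A μ) (hA0 : 0 ≤ᵐ[μ] A) (ha : Integrable a μ)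
    (hAa : μ[A|m] =ᵐ[μ] a * (1 - g))
    (hB : Integrable B μ) (hB0 : 0 ≤ᵐ[μ] B) (hb : Integrable b μ)
    (hBb : μ[B|m] =ᵐ[μ] b * g) :
    μ[fun ω => 1 - A ω / (1 - g ω) - B ω / g ω|m] =ᵐ[μ] fun ω => 1 - a ω - b ω := by
  obtain ⟨hAi, hAc⟩ := integrable_div_and_condExp_div_of_condExp_eq_mul hm (h := 1 - g)
    (aestronglyMeasurable_const.sub hg)
    (by filter_upwards [hg01] with ω h using sub_pos.2 h.2) hA hA0 ha hAa
  obtain ⟨hBi, hBc⟩ := integrable_div_and_condExp_div_of_condExp_eq_mul hm hg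
    (by filter_upwards [hg01] with ω h using h.1) hB hB0 hb hBb
  filter_upwards [condExp_one_sub_sub hm hAi hBi, hAc, hBc] with ω h hA hB
  rw [← hA, ← hB]
  exact h

theorem condExp_mul_of_condIndep_of_binary {V : Ω → ℝ × ℝ} {Z g : Ω → ℝ}
    (hindep : ∀ φ : ℝ × ℝ → ℝ, Measurable φ → (∃ K, ∀ v, |φ v| ≤ K) →
      μ[fun ω => φ (V ω) * Z ω|m] =ᵐ[μ] fun ω => μ[fun ω' => φ (V ω')|m] ω * g ω)
    {u : ℝ × ℝ → ℝ} (hu : Measurable u) (hu01 : ∀ ω, u (V ω) = 0 ∨ u (V ω) = 1) :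
    μ[fun ω => u (V ω) * Z ω|m] =ᵐ[μ] fun ω => μ[fun ω => u (V ω)|m] ω * g ω := by
  have h := hindep (fun v => min |u v| 1) (by fun_prop) ⟨1, fun v => abs_min_abs_one_le _⟩
  simp only [min_abs_one_of_binary (hu01 _)] at h
  exact h

end MeasureTheory

/-- Abadie's kappa weight identifies the conditional complier probability:
E[κ | X] = P(D(1)>D(0) | X) a.s., and hence E[κ] = P(D(1)>D(0)). -/
theorem stmt15 {Ω 𝓧 : Type*} [MeasurableSpace Ω] [MeasurableSpace 𝓧]
    (P : Measure Ω) [IsProbabilityMeasure P]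
    (X : Ω → 𝓧) (hX : Measurable X)
    (Z D D0 D1 : Ω → ℝ)
    (hZm : Measurable Z) (hD0m : Measurable D0) (hD1m : Measurable D1)
    (hZ01 : ∀ ω, Z ω = 0 ∨ Z ω = 1)
    (hD0 : ∀ ω, D0 ω = 0 ∨ D0 ω = 1) (hD1 : ∀ ω, D1 ω = 0 ∨ D1 ω = 1)
    (hcons : ∀ ω, D ω = Z ω * D1 ω + (1 - Z ω) * D0 ω)
    (hmono : ∀ᵐ ω ∂P, D0 ω ≤ D1 ω)
    (g₀ : Ω → ℝ) (hg₀ : g₀ =ᵐ[P] P[Z | sigmaX X])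
    (hpos : ∀ᵐ ω ∂P, 0 < g₀ ω ∧ g₀ ω < 1)
    -- conditional independence of (D0, D1) and Z given X
    (hindep : ∀ φ : ℝ × ℝ → ℝ, Measurable φ → (∃ K, ∀ v, |φ v| ≤ K) →
      P[fun ω => φ (D0 ω, D1 ω) * Z ω | sigmaX X]
        =ᵐ[P] fun ω => (P[fun ω' => φ (D0 ω', D1 ω') | sigmaX X]) ω * g₀ ω)
    (κ : Ω → ℝ)
    (hκ : ∀ ω, κ ω = 1 - D ω * (1 - Z ω) / (1 - g₀ ω) - (1 - D ω) * Z ω / g₀ ω) :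
    (P[κ | sigmaX X] =ᵐ[P] P[fun ω => if D0 ω < D1 ω then (1 : ℝ) else 0 | sigmaX X]) ∧
    (∫ ω, κ ω ∂P = (P {ω | D0 ω < D1 ω}).toReal) := by
  have hm : sigmaX X ≤ ‹MeasurableSpace Ω› := hX.comap_le
  have hg₀m : AEStronglyMeasurable[sigmaX X] g₀ P :=
    stronglyMeasurable_condExp.aestronglyMeasurable.congr hg₀.symm
  have h1D1 (ω : Ω) := binary_one_sub (hD1 ω)
  have hA01 (ω : Ω) := binary_mul (hD0 ω) (binary_one_sub (hZ01 ω))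
  have hB01 (ω : Ω) := binary_mul (h1D1 ω) (hZ01 ω)
  have hD0i : Integrable D0 P := integrable_of_binary hD0m hD0
  have hweights := condExp_one_sub_div_sub_div hm hg₀m hpos
    (integrable_of_binary (hD0m.mul (measurable_const.sub hZm)) hA01)
    (ae_of_all _ fun ω => nonneg_of_binary (hA01 ω)) integrable_condExp
    (condExp_mul_one_sub_of_condExp_mul hD0i
      (integrable_of_binary (hD0m.mul hZm) fun ω => binary_mul (hD0 ω) (hZ01 ω))
      (condExp_mul_of_condIndep_of_binary hindep measurable_fst hD0))
    (integrable_of_binary ((measurable_const.sub hD1m).mul hZm) hB01)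
    (ae_of_all _ fun ω => nonneg_of_binary (hB01 ω)) integrable_condExp
    (condExp_mul_of_condIndep_of_binary hindep (u := fun v => 1 - v.2) (by fun_prop) h1D1)
  have hκ' : κ = fun ω =>
      1 - D0 ω * (1 - Z ω) / (1 - g₀ ω) - (1 - D1 ω) * Z ω / g₀ ω :=
    funext fun ω => (hκ ω).trans (abadie_kappa_eq (hZ01 ω) (hcons ω))
  have hcompl : (fun ω => if D0 ω < D1 ω then (1 : ℝ) else 0) =ᵐ[P]
      fun ω => 1 - D0 ω - (1 - D1 ω) := by
    filter_upwards [hmono] with ω h using ite_lt_eq_one_sub_sub_one_sub (hD0 ω) (hD1 ω) h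
  have hmain : P[κ|sigmaX X] =ᵐ[P]
      P[fun ω => if D0 ω < D1 ω then (1 : ℝ) else 0|sigmaX X] := by
    filter_upwards [hweights, condExp_congr_ae (m := sigmaX X) hcompl,
      condExp_one_sub_sub hm hD0i (integrable_of_binary (measurable_const.sub hD1m) h1D1)]
      with ω hκω hcω hlin
    rw [hκ', hcω]
    exact hκω.trans hlin.symm
  refine ⟨hmain, ?_⟩
  rw [← integral_condExp hm, integral_congr_ae hmain, integral_condExp hm,
    ← measureReal_def, ← integral_indicator_one (measurableSet_lt hD0m hD1m)]
  congr 1 with ω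
end
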